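/- arXiv:1405.5558 — 11 statements merged into one kernel-verified Lean document; each statement's English description precedes it below -/
import Mathlib

section
/- Let W = {−1, 0, 1} ⊂ ℝ and let c : ℝ∖W → {1, 2} be the constant coloring c(x) = 1 for all x ∈ ℝ∖W. Then every extension c* : ℝ → {1, 2} of c is preserved by some non-identity element of Aut(ℝ). Consequently ext_D(ℝ, Aut(ℝ); 2) ≥ 4. -/
/-- `Aut(ℝ)`: the maps `x ↦ ε x + b` with `ε ∈ {1, -1}`,
i.e. all compositions of translations and reflections of the real line. -/
def IsAutR (f : ℝ → ℝ) : Prop :=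
  ∃ ε b : ℝ, (ε = 1 ∨ ε = -1) ∧ ∀ x : ℝ, f x = ε * x + b

/-- A `2`-coloring of `ℝ` is distinguishing with respect to `Aut(ℝ)` if the only
automorphism preserving it is the identity. -/
def DistinguishingR (c : ℝ → Fin 2) : Prop :=
  ∀ f : ℝ → ℝ, IsAutR f → (∀ x : ℝ, c (f x) = c x) → f = id

/-- `W` is a fixing set for `Aut(ℝ)`: every non-identity automorphism moves
some element of `W`. -/
def FixingSetR (W : Set ℝ) : Prop :=
  ∀ f : ℝ → ℝ, IsAutR f → f ≠ id → ∃ s ∈ W, f s ≠ s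

/-- The defining property of the distinguishing extension number
`ext_D(ℝ, Aut(ℝ); 2)`: `ExtPropR m` says that for every fixing set `W ⊆ ℝ` with
`|W| ≥ m`, every `2`-coloring of `ℝ \ W` extends to a distinguishing
`2`-coloring of `ℝ`.  `ext_D(ℝ, Aut(ℝ); 2)` is the least `m` with `ExtPropR m`. -/
def ExtPropR (m : ℕ) : Prop :=
  ∀ W : Set ℝ, FixingSetR W → (m : Cardinal) ≤ Cardinal.mk W →
    ∀ c : ℝ → Fin 2, ∃ c' : ℝ → Fin 2, (∀ x ∉ W, c' x = c x) ∧ DistinguishingR c'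

lemma key (cstar : ℝ → Fin 2) (h : ∀ x : ℝ, x ∉ ({-1, 0, 1} : Set ℝ) → cstar x = 0)
    (s : ℝ) (h1 : cstar (s + 1) = cstar (-1)) (h2 : cstar s = cstar 0)
    (h3 : cstar (s - 1) = cstar 1) : ∀ x : ℝ, cstar (s - x) = cstar x := by
  intro x
  by_cases e1 : x = -1
  · rw [e1, show s - (-1) = s + 1 by ring]; exact h1
  by_cases e2 : x = 0
  · rw [e2, sub_zero]; exact h2
  by_cases e3 : x = 1
  · rw [e3]; exact h3
  by_cases e4 : x = s + 1
  · rw [e4, show s - (s + 1) = -1 by ring]; exact h1.symm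
  by_cases e5 : x = s
  · rw [e5, sub_self]; exact h2.symm
  by_cases e6 : x = s - 1
  · rw [e6, show s - (s - 1) = 1 by ring]; exact h3.symm
  have hx : x ∉ ({-1, 0, 1} : Set ℝ) := by simp [Set.mem_insert_iff]; tauto
  have hsx : s - x ∉ ({-1, 0, 1} : Set ℝ) := by
    simp [Set.mem_insert_iff]
    refine ⟨?_, ?_, ?_⟩ <;> intro hc
    · exact e4 (by linarith)
    · exact e5 (by linarith)
    · exact e6 (by linarith)
  rw [h x hx, h (s - x) hsx]

lemma refl_aut (s : ℝ) : IsAutR (fun x => s - x) ∧ (fun x : ℝ => s - x) ≠ id := by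
  constructor
  · exact ⟨-1, s, Or.inr rfl, fun x => by ring⟩
  · intro hid
    have := congrFun hid (s / 2 + 1)
    simp only [id] at this
    linarith

lemma notW (x : ℝ) (h1 : x ≠ -1) (h2 : x ≠ 0) (h3 : x ≠ 1) : x ∉ ({-1, 0, 1} : Set ℝ) := by
  simp [Set.mem_insert_iff]; tauto

lemma part1 : ∀ cstar : ℝ → Fin 2, (∀ x : ℝ, x ∉ ({-1, 0, 1} : Set ℝ) → cstar x = 0) →
    ∃ f : ℝ → ℝ, IsAutR f ∧ f ≠ id ∧ ∀ x : ℝ, cstar (f x) = cstar x := by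
  intro cstar h
  have hd : ∀ v : Fin 2, v = 0 ∨ v = 1 := by decide
  by_cases hac : cstar (-1) = cstar 1
  · exact ⟨fun x => 0 - x, (refl_aut 0).1, (refl_aut 0).2,
      key cstar h 0 (by norm_num [hac.symm]) rfl (by norm_num [hac])⟩
  · have hc1 : ∀ x : ℝ, x ≠ -1 → x ≠ 0 → x ≠ 1 → cstar x = 0 :=
      fun x a b c => h x (notW x a b c)
    rcases hd (cstar (-1)) with ha | ha <;> rcases hd (cstar 0) with hb | hb
    · -- a=0, b=0 : s = 2
      refine ⟨fun x => 2 - x, (refl_aut 2).1, (refl_aut 2).2, key cstar h 2 ?_ ?_ ?_⟩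
      · norm_num [ha, hc1 3 (by norm_num) (by norm_num) (by norm_num)]
      · norm_num [hb, hc1 2 (by norm_num) (by norm_num) (by norm_num)]
      · norm_num
    · -- a=0, b=1, so c=1 : s = 1
      have hc : cstar 1 = 1 := by
        rcases hd (cstar 1) with hcv | hcv
        · exact absurd (ha.trans hcv.symm) hac
        · exact hcv
      refine ⟨fun x => 1 - x, (refl_aut 1).1, (refl_aut 1).2, key cstar h 1 ?_ ?_ ?_⟩
      · norm_num [ha, hc1 2 (by norm_num) (by norm_num) (by norm_num)]
      · norm_num [hb, hc]
      · norm_num [hb, hc]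
    · -- a=1, b=0, so c=0 : s = -2
      have hc : cstar 1 = 0 := by
        rcases hd (cstar 1) with hcv | hcv
        · exact hcv
        · exact absurd (ha.trans hcv.symm) hac
      refine ⟨fun x => -2 - x, (refl_aut (-2)).1, (refl_aut (-2)).2, key cstar h (-2) ?_ ?_ ?_⟩
      · norm_num
      · norm_num [hb, hc1 (-2) (by norm_num) (by norm_num) (by norm_num)]
      · norm_num [hc, hc1 (-3) (by norm_num) (by norm_num) (by norm_num)]
    · -- a=1, b=1, so c=0 : s = -1
      have hc : cstar 1 = 0 := by
        rcases hd (cstar 1) with hcv | hcv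
        · exact hcv
        · exact absurd (ha.trans hcv.symm) hac
      refine ⟨fun x => -1 - x, (refl_aut (-1)).1, (refl_aut (-1)).2, key cstar h (-1) ?_ ?_ ?_⟩
      · norm_num [ha, hb]
      · norm_num [ha, hb]
      · norm_num [hc, hc1 (-2) (by norm_num) (by norm_num) (by norm_num)]

lemma fixW : FixingSetR ({-1, 0, 1} : Set ℝ) := by
  rintro f ⟨ε, b, hε, hf⟩ hne
  by_cases hb : b = 0
  · rcases hε with hε | hε
    · exact absurd (funext fun x => by rw [hf, hε, hb]; simp) hne
    · exact ⟨1, by simp, by rw [hf, hε, hb]; norm_num⟩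
  · exact ⟨0, by simp, by rw [hf]; simpa using hb⟩

/-- Let `W = {-1, 0, 1}` and let `c` be the coloring of `ℝ \ W` constantly equal to the
first color.  Every extension `c*` of `c` to `ℝ` (i.e. every `2`-coloring of `ℝ` equal to
the first color off `W`) is preserved by some non-identity element of `Aut(ℝ)`.
Consequently `ext_D(ℝ, Aut(ℝ); 2) ≥ 4`. -/
theorem extension_lower_bound_real :
    (∀ cstar : ℝ → Fin 2, (∀ x : ℝ, x ∉ ({-1, 0, 1} : Set ℝ) → cstar x = 0) →
      ∃ f : ℝ → ℝ, IsAutR f ∧ f ≠ id ∧ ∀ x : ℝ, cstar (f x) = cstar x) ∧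
    (∀ m : ℕ, ExtPropR m → 4 ≤ m) := by
  refine ⟨part1, ?_⟩
  intro m hm
  by_contra hlt
  push_neg at hlt
  have hm3 : m ≤ 3 := by omega
  have hcard : Cardinal.mk ({-1, 0, 1} : Set ℝ) = 3 := by
    rw [Cardinal.mk_insert (by norm_num), Cardinal.mk_insert (by norm_num),
      Cardinal.mk_singleton]
    norm_num
  obtain ⟨c', hc', hdist⟩ := hm ({-1, 0, 1} : Set ℝ) fixW
    (by rw [hcard]; exact_mod_cast hm3) (fun _ => 0)
  obtain ⟨f, haut, hne, hpres⟩ := part1 c' hc'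
  exact hne (hdist f haut hpres)
end

section
/- Let Γ be a group acting on a set X and let k ≥ D_Γ(X). If G is a finite graph that admits a Γ-faithful embedding into X and D(G) > k, then ext_D(X, Γ; k) ≥ 1 + |V(G)|. -/
open Pointwise

/-- A `k`-coloring of `X` is distinguishing with respect to the action of `Γ`
if the only group element preserving it is the identity. -/
def DistColoring (Γ : Type*) {X : Type*} [Group Γ] [MulAction Γ X] {k : ℕ}
    (c : X → Fin k) : Prop :=
  ∀ γ : Γ, (∀ x : X, c (γ • x) = c x) → γ = 1

/-- `W` is a fixing set for the action of `Γ` on `X`: every non-identity element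
of `Γ` moves some element of `W`. -/
def IsFixingSet (Γ : Type*) {X : Type*} [Group Γ] [MulAction Γ X] (W : Set X) : Prop :=
  ∀ γ : Γ, γ ≠ 1 → ∃ s ∈ W, γ • s ≠ s

/-- `ExtProp Γ X k m` says that for every fixing set `W ⊆ X` with `|W| ≥ m`, every
`k`-coloring of `X \ W` extends to a distinguishing `k`-coloring of `X`.
The distinguishing extension number `ext_D(X, Γ; k)` is the least such `m`. -/
def ExtProp (Γ : Type*) (X : Type*) [Group Γ] [MulAction Γ X] (k m : ℕ) : Prop :=
  ∀ W : Set X, IsFixingSet Γ W → (m : Cardinal) ≤ Cardinal.mk W →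
    ∀ c : X → Fin k, ∃ c' : X → Fin k, (∀ x ∉ W, c' x = c x) ∧ DistColoring Γ c'

/-- The automorphism group of a graph `G`, as the subgroup of permutations of the
vertices that preserve adjacency. -/
def SimpleGraph.autGroup {V : Type*} (G : SimpleGraph V) : Subgroup (Equiv.Perm V) where
  carrier := {σ | ∀ u v, G.Adj (σ u) (σ v) ↔ G.Adj u v}
  one_mem' := fun _ _ => Iff.rfl
  mul_mem' := by
    intro a b ha hb u v
    simpa [Equiv.Perm.mul_apply] using (ha (b u) (b v)).trans (hb u v)
  inv_mem' := by
    intro a ha u v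
    rw [← ha (a⁻¹ u) (a⁻¹ v)]
    simp

open MulAction Set

/-
Take `W = φ(V)`. It is a fixing set: an element fixing `W` pointwise stabilizes `W` and is sent
by `ψ` to the identity of `Aut(G)`. If `ext_D(X, Γ; k) ≤ |V|`, colour `X \ W` with a single
colour and extend to a distinguishing colouring `c` of `X`. Since `D(G) > k`, some non-trivial
`σ ∈ Aut(G)` preserves `c ∘ φ`; then `ψ⁻¹ σ` preserves `c` on `W`, and also on `X \ W`, which it
maps to itself and where `c` is constant. So `ψ⁻¹ σ = 1`, a contradiction.
-/

theorem DistColoring.eq_one_of_mem_stabilizer {Γ X : Type*} [Group Γ] [MulAction Γ X] {k : ℕ}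
    {c : X → Fin k} (hc : DistColoring Γ c) {W : Set X} {a : Fin k} (hconst : ∀ x ∉ W, c x = a)
    {γ : Γ} (hγ : γ ∈ stabilizer Γ W)
    (hpres : ∀ x ∈ W, c (γ • x) = c x) : γ = 1 := by
  refine hc γ fun x => ?_
  by_cases hx : x ∈ W
  · exact hpres x hx
  · rw [hconst x hx, hconst _ (mt (mem_stabilizer_set.mp hγ x).mp hx)]

theorem distColoring_of_isEmpty {V : Type*} [IsEmpty V] (A : Subgroup (Equiv.Perm V)) {k : ℕ}
    (c : V → Fin k) : DistColoring A c :=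
  fun _ _ => Subsingleton.elim _ _

section FaithfulEmbedding

variable {Γ X V : Type*} [Group Γ] [MulAction Γ X] {A : Subgroup (Equiv.Perm V)} {φ : V → X}
  (ψ : stabilizer Γ (range φ) ≃* A)
  (hψ : ∀ (γ : stabilizer Γ (range φ)) (v : V), (γ : Γ) • φ v = φ ((ψ γ : Equiv.Perm V) v))
include hψ

theorem isFixingSet_range (hφ : Function.Injective φ) : IsFixingSet Γ (range φ) := by
  intro γ hγ
  by_contra! hfix
  have hγW : γ ∈ stabilizer Γ (range φ) :=
    fixingSubgroup_le_stabilizer Γ _ ((mem_fixingSubgroup_iff Γ).mpr hfix)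
  have hψγ : ψ ⟨γ, hγW⟩ = 1 :=
    Subtype.ext <| Equiv.ext fun v => hφ <| by
      rw [← hψ ⟨γ, hγW⟩ v]
      exact hfix _ ⟨v, rfl⟩
  exact hγ <| congrArg Subtype.val (ψ.map_eq_one_iff.mp hψγ)

theorem DistColoring.comp_of_const_compl_range {k : ℕ} {c : X → Fin k} (hc : DistColoring Γ c)
    {a : Fin k} (hconst : ∀ x ∉ range φ, c x = a) : DistColoring A (c ∘ φ) := by
  intro σ hσ
  have hγ : ∀ v, ((ψ.symm σ : stabilizer Γ (range φ)) : Γ) • φ v = φ ((σ : Equiv.Perm V) v) := by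
    simpa using hψ (ψ.symm σ)
  have h1 : ((ψ.symm σ : stabilizer Γ (range φ)) : Γ) = 1 := by
    refine hc.eq_one_of_mem_stabilizer hconst (ψ.symm σ).2 ?_
    rintro _ ⟨v, rfl⟩
    rw [hγ]
    exact hσ v
  simpa using congrArg ψ (Subtype.ext h1 : ψ.symm σ = 1)

end FaithfulEmbedding

/-- Let `Γ` act on `X` and let `k ≥ D_Γ(X)` (i.e. `X` has a distinguishing
`k`-coloring).  If a finite graph `G` admits a `Γ`-faithful embedding `φ` into `X`
(an injection whose image's setwise stabilizer `Γ'` is isomorphic to `Aut(G)` via `ψ`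
with `γ • φ(v) = φ(ψ(γ)(v))` for all `γ ∈ Γ'` and `v`), and `D(G) > k` (i.e. `G` has
no distinguishing `k`-coloring), then `ext_D(X, Γ; k) ≥ 1 + |V(G)|`; equivalently,
every `m` witnessing the extension property for `(X, Γ; k)` satisfies `m ≥ 1 + |V(G)|`. -/
theorem extension_number_faithful_embedding_large {Γ X V : Type*} [Group Γ] [MulAction Γ X]
    [Fintype V] (G : SimpleGraph V) (k : ℕ)
    (hkD : ∃ c : X → Fin k, DistColoring Γ c)
    (φ : V → X) (hφ : Function.Injective φ)
    (ψ : MulAction.stabilizer Γ (Set.range φ) ≃* G.autGroup)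
    (hψ : ∀ (γ : MulAction.stabilizer Γ (Set.range φ)) (v : V),
      (γ : Γ) • φ v = φ (((ψ γ : G.autGroup) : Equiv.Perm V) v))
    (hDG : ¬ ∃ c : V → Fin k, DistColoring G.autGroup c) :
    ∀ m : ℕ, ExtProp Γ X k m → 1 + Fintype.card V ≤ m := by
  intro m hm
  by_contra! hm_le
  obtain ⟨c₀, -⟩ := hkD
  obtain ⟨v₀⟩ : Nonempty V := by
    by_contra! hV
    exact hDG ⟨c₀ ∘ φ, distColoring_of_isEmpty _ _⟩
  have hcard : (m : Cardinal) ≤ Cardinal.mk (range φ) := by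
    classical
    rw [Cardinal.mk_fintype, Set.card_range_of_injective hφ]
    exact_mod_cast (by omega : m ≤ Fintype.card V)
  obtain ⟨c, hc_compl, hc⟩ :=
    hm (range φ) (isFixingSet_range ψ hψ hφ) hcard fun _ => c₀ (φ v₀)
  exact hDG ⟨c ∘ φ, hc.comp_of_const_compl_range ψ hψ hc_compl⟩
end

section
/- Let W ⊂ ℝ/ℤ be a set with |W| ≥ 16. Then there exists a subset W′ ⊂ W with |W′| = 4 such that W′ satisfies the Divisibility Condition. -/
/-- The circle `ℝ/ℤ`. -/
abbrev Circle1 := AddCircle (1 : ℝ)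

/-- `Aut(ℝ/ℤ)`: the rotations `x ↦ x + α` and the reflections `x ↦ β - x`. -/
def IsAutCirc (f : Circle1 → Circle1) : Prop :=
  (∃ α : Circle1, ∀ x, f x = x + α) ∨ (∃ β : Circle1, ∀ x, f x = β - x)

/-- A `2`-coloring of `ℝ/ℤ` is distinguishing with respect to `Aut(ℝ/ℤ)` if the
only automorphism preserving it is the identity. -/
def DistinguishingC (c : Circle1 → Fin 2) : Prop :=
  ∀ f : Circle1 → Circle1, IsAutCirc f → (∀ x, c (f x) = c x) → f = id

/-- `W` is a fixing set for `Aut(ℝ/ℤ)`: every non-identity automorphism moves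
some element of `W`. -/
def FixingSetC (W : Set Circle1) : Prop :=
  ∀ f : Circle1 → Circle1, IsAutCirc f → f ≠ id → ∃ s ∈ W, f s ≠ s

/-- The Divisibility Condition: `(W + i/k) ∩ W = ∅` for all `k ∈ {2,3,4,5}` and
all `i ∈ {1, …, k-1}`. -/
def DivCond (W : Set Circle1) : Prop :=
  ∀ k ∈ ({2, 3, 4, 5} : Set ℕ), ∀ i : ℕ, 1 ≤ i → i < k →
    ((fun w => w + (((i : ℝ) / (k : ℝ) : ℝ) : Circle1)) '' W) ∩ W = ∅

noncomputable instance : Fact ((0:ℝ) < 1) := ⟨one_pos⟩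

/-- The representative of `x : ℝ/ℤ` in `[0, 1)`. -/
noncomputable def colR (x : Circle1) : ℝ := (AddCircle.equivIco 1 0 x : ℝ)

lemma colR_mem (x : Circle1) : colR x ∈ Set.Ico (0:ℝ) 1 := by
  have := (AddCircle.equivIco 1 0 x).2
  simpa [colR] using this

lemma colR_coe (x : Circle1) : ((colR x : ℝ) : Circle1) = x :=
  (AddCircle.equivIco 1 0).symm_apply_apply x

/-- A 5-coloring of the circle: `⌊5 · frac(x)⌋`. -/
noncomputable def col (x : Circle1) : ℤ := ⌊5 * colR x⌋

lemma col_mem (x : Circle1) : col x ∈ Finset.Icc (0:ℤ) 4 := by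
  obtain ⟨h0, h1⟩ := colR_mem x
  rw [Finset.mem_Icc, col]
  refine ⟨Int.floor_nonneg.2 (by linarith), ?_⟩
  have hlt : ⌊(5:ℝ) * colR x⌋ < 5 :=
    Int.floor_lt.2 (by push_cast; linarith)
  omega

/-- Points that differ by `q ∈ [1/5, 4/5]` get different colors. -/
lemma col_ne (x : Circle1) (q : ℝ) (h1 : 1/5 ≤ q) (h2 : q ≤ 4/5) :
    col (x + (q : Circle1)) ≠ col x := by
  obtain ⟨ha0, ha1⟩ := colR_mem x
  obtain ⟨hb0, hb1⟩ := colR_mem (x + (q : Circle1))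
  have hcoe : ((colR (x + (q : Circle1)) - colR x - q : ℝ) : Circle1) = 0 := by
    rw [sub_sub]
    rw [QuotientAddGroup.mk_sub, QuotientAddGroup.mk_add, colR_coe, colR_coe]
    abel
  obtain ⟨n, hn⟩ := (AddCircle.coe_eq_zero_iff (1:ℝ)).1 hcoe
  have hn' : (n : ℝ) = colR (x + (q : Circle1)) - colR x - q := by simpa using hn
  have h1' : (-2 : ℤ) < n := by exact_mod_cast (by linarith : (-2:ℝ) < (n:ℝ))
  have h2' : n < 1 := by exact_mod_cast (by linarith : (n:ℝ) < 1)
  intro hcol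
  have hfa := Int.floor_le (5 * colR x)
  have hfa' := Int.lt_floor_add_one (5 * colR x)
  have hfb := Int.floor_le (5 * colR (x + (q : Circle1)))
  have hfb' := Int.lt_floor_add_one (5 * colR (x + (q : Circle1)))
  rw [col, col] at hcol
  rw [hcol] at hfb hfb'
  interval_cases n <;> (push_cast at hn' hfb hfb' hfa hfa' ⊢; linarith)

lemma frac_bounds {k i : ℕ} (hk : k ∈ ({2, 3, 4, 5} : Set ℕ)) (hi1 : 1 ≤ i)
    (hik : i < k) : 1/5 ≤ (i:ℝ)/(k:ℝ) ∧ (i:ℝ)/(k:ℝ) ≤ 4/5 := by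
  simp only [Set.mem_insert_iff, Set.mem_singleton_iff] at hk
  rcases hk with rfl | rfl | rfl | rfl <;> interval_cases i <;> norm_num

/-- Every set `W ⊂ ℝ/ℤ` with `|W| ≥ 16` contains a four-element subset `W'`
satisfying the Divisibility Condition. -/
theorem sixteen_blanks_divisibility (W : Set Circle1)
    (hW : (16 : Cardinal) ≤ Cardinal.mk W) :
    ∃ W' ⊆ W, W'.ncard = 4 ∧ DivCond W' := by
  classical
  have hemb : Nonempty (Fin 16 ↪ W) := by
    have h16 : Cardinal.mk (Fin 16) = (16 : Cardinal) := by
      rw [Cardinal.mk_fin]; norm_num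
    rw [← h16] at hW
    exact Cardinal.le_def _ _ |>.1 hW
  obtain ⟨e⟩ := hemb
  have hcolmem : ∀ j : Fin 16, 0 ≤ col (e j : Circle1) ∧ col (e j : Circle1) < 5 := by
    intro j
    have := col_mem (e j : Circle1)
    rw [Finset.mem_Icc] at this
    omega
  let f : Fin 16 → Fin 5 := fun j =>
    ⟨(col (e j : Circle1)).toNat, by have := hcolmem j; omega⟩
  obtain ⟨y, hy⟩ := Fintype.exists_lt_card_fiber_of_mul_lt_card (n := 3) f (by norm_num)
  obtain ⟨s, hs_sub, hs_card⟩ :=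
    Finset.exists_subset_card_eq (by omega : 4 ≤ (Finset.univ.filter fun x => f x = y).card)
  have hinj : Function.Injective (fun j : Fin 16 => (e j : Circle1)) := by
    intro a b hab
    exact e.injective (Subtype.ext hab)
  refine ⟨(fun j : Fin 16 => (e j : Circle1)) '' ↑s, ?_, ?_, ?_⟩
  · rintro z ⟨j, _, rfl⟩; exact (e j).2
  · rw [Set.ncard_image_of_injective _ hinj, Set.ncard_coe_finset, hs_card]
  · -- all elements of the image have the same color (y : ℤ)
    have hcol : ∀ z ∈ (fun j : Fin 16 => (e j : Circle1)) '' ↑s, col z = (y : ℤ) := by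
      rintro z ⟨j, hj, rfl⟩
      have hj' := hs_sub hj
      rw [Finset.mem_filter] at hj'
      have : f j = y := hj'.2
      have h2 := congrArg (fun t : Fin 5 => (t : ℕ)) this
      simp only [f] at h2
      have := (hcolmem j).1
      show col (e j : Circle1) = (y : ℤ)
      omega
    intro k hk i hi1 hik
    rw [Set.eq_empty_iff_forall_notMem]
    rintro z ⟨⟨w, hw, rfl⟩, hz⟩
    obtain ⟨hb1, hb2⟩ := frac_bounds hk hi1 hik
    exact col_ne w ((i:ℝ)/(k:ℝ)) hb1 hb2 (by rw [hcol _ hz, hcol _ hw])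
end

section
/- For every n ≥ 6, ext_D(C_n; 2) ≤ ext_D(ℝ/ℤ, Aut(ℝ/ℤ); 2). -/
/-- `σ` is an automorphism of the graph `G`: a permutation of the vertices
preserving adjacency. -/
def IsGraphAut {V : Type*} (G : SimpleGraph V) (σ : Equiv.Perm V) : Prop :=
  ∀ u v : V, G.Adj (σ u) (σ v) ↔ G.Adj u v

/-- A `2`-coloring of the vertices of `G` is distinguishing if the only
automorphism of `G` preserving it is the identity. -/
def DistinguishingG {V : Type*} (G : SimpleGraph V) (c : V → Fin 2) : Prop :=
  ∀ σ : Equiv.Perm V, IsGraphAut G σ → (∀ v, c (σ v) = c v) → σ = 1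

/-- `W` is a fixing set for `Aut(G)`: every non-identity automorphism of `G`
moves some element of `W`. -/
def FixingSetG {V : Type*} (G : SimpleGraph V) (W : Set V) : Prop :=
  ∀ σ : Equiv.Perm V, IsGraphAut G σ → σ ≠ 1 → ∃ s ∈ W, σ s ≠ s

/-- `ExtPropG G m` says that for every fixing set `W ⊆ V(G)` with `|W| ≥ m`, every
`2`-coloring of `V(G) \ W` extends to a distinguishing `2`-coloring of `G`.
The distinguishing extension number `ext_D(G; 2)` is the least such `m`. -/
def ExtPropG {V : Type*} (G : SimpleGraph V) (m : ℕ) : Prop :=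
  ∀ W : Set V, FixingSetG G W → (m : Cardinal) ≤ Cardinal.mk W →
    ∀ c : V → Fin 2, ∃ c' : V → Fin 2, (∀ v ∉ W, c' v = c v) ∧ DistinguishingG G c'

/-- The cycle graph `C_n` on the vertex set `ℤ/nℤ`, where `i` is adjacent to `i ± 1`. -/
def CycleGraph (n : ℕ) : SimpleGraph (ZMod n) :=
  SimpleGraph.fromRel (fun i j => i - j = 1)

/-- `ExtPropC m` says that for every fixing set `W ⊆ ℝ/ℤ` with `|W| ≥ m`, every
`2`-coloring of `(ℝ/ℤ) \ W` extends to a distinguishing `2`-coloring of `ℝ/ℤ`.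
The distinguishing extension number `ext_D(ℝ/ℤ, Aut(ℝ/ℤ); 2)` is the least such `m`. -/
def ExtPropC (m : ℕ) : Prop :=
  ∀ W : Set Circle1, FixingSetC W → (m : Cardinal) ≤ Cardinal.mk W →
    ∀ c : Circle1 → Fin 2, ∃ c' : Circle1 → Fin 2, (∀ x ∉ W, c' x = c x) ∧ DistinguishingC c'

/-!
The map `i ↦ i / n` embeds `ℤ/nℤ` into `ℝ/ℤ` as a subgroup, and every automorphism of `C_n`
(a rotation `i ↦ i + a` or a reflection `i ↦ b - i`) is the restriction of the corresponding
automorphism of the circle, which maps the embedded copy, and hence its complement, onto itself.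
So a fixing set `W` of `C_n` is sent to a fixing set of the circle of the same size. Precolour the
circle by `c` on the image of `ℤ/nℤ` and by `0` elsewhere, extend distinguishingly, and restrict:
an automorphism of `C_n` preserving the restricted colouring extends to one of the circle that
preserves the whole colouring, so it is the identity.
-/

theorem Equiv.subLeft_ne_one {R : Type*} [CommRing R] (h2 : (2 : R) ≠ 0) (b : R) :
    Equiv.subLeft b ≠ 1 := by
  intro h
  have h0 : b - 0 = 0 := congr($h 0)
  have h1 : b - 1 = 1 := congr($h 1)
  exact h2 (by linear_combination h0 - h1)

theorem Function.Semiconj.apply_eq_of_const_off_range {V X β : Type*} {e : V → X} {σ : V → V}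
    {f : X → X} (hsemi : Function.Semiconj e σ f) (hrange : f ⁻¹' Set.range e ⊆ Set.range e)
    {c : X → β} {b₀ : β} (hc : ∀ x ∉ Set.range e, c x = b₀) (hσ : ∀ v, c (e (σ v)) = c (e v))
    (x : X) : c (f x) = c x := by
  by_cases hx : x ∈ Set.range e
  · obtain ⟨v, rfl⟩ := hx
    rw [← hsemi, hσ]
  · rw [hc x hx, hc (f x) fun hfx => hx (hrange hfx)]

theorem exists_isAutCirc_semiconj {G : Type*} [AddGroup G] (e : G →+ Circle1)
    {σ : Equiv.Perm G} (hσ : (∃ a, σ = Equiv.addRight a) ∨ ∃ b, σ = Equiv.subLeft b) :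
    ∃ f, IsAutCirc f ∧ Function.Semiconj e σ f ∧ f ⁻¹' Set.range e ⊆ Set.range e := by
  rcases hσ with ⟨a, rfl⟩ | ⟨b, rfl⟩
  · refine ⟨(· + e a), .inl ⟨e a, fun _ => rfl⟩, fun v => map_add e v a, ?_⟩
    rintro x ⟨v, hv⟩
    exact ⟨v - a, by rw [map_sub, hv, add_sub_cancel_right]⟩
  · refine ⟨(e b - ·), .inr ⟨e b, fun _ => rfl⟩, fun v => map_sub e b v, ?_⟩
    rintro x ⟨v, hv⟩
    exact ⟨b - v, by rw [map_sub, hv, sub_sub_cancel]⟩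

section CycleGraph

variable {n : ℕ}

theorem cycleGraph_adj_iff [Nontrivial (ZMod n)] {x y : ZMod n} :
    (CycleGraph n).Adj x y ↔ y = x + 1 ∨ x = y + 1 := by
  rw [CycleGraph, SimpleGraph.fromRel_adj, sub_eq_iff_eq_add', sub_eq_iff_eq_add', or_comm,
    and_iff_right_of_imp]
  rintro (rfl | rfl) <;> simp

theorem isGraphAut_addRight (a : ZMod n) : IsGraphAut (CycleGraph n) (Equiv.addRight a) := by
  intro u v
  simp [CycleGraph, SimpleGraph.fromRel_adj, add_sub_add_right_eq_sub]

theorem isGraphAut_subLeft (b : ZMod n) : IsGraphAut (CycleGraph n) (Equiv.subLeft b) := by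
  intro u v
  simp [CycleGraph, SimpleGraph.fromRel_adj, sub_sub_sub_cancel_left, or_comm]

variable [NeZero n]

theorem IsGraphAut.eq_addRight_or_eq_subLeft [Nontrivial (ZMod n)] {σ : Equiv.Perm (ZMod n)}
    (hσ : IsGraphAut (CycleGraph n) σ) :
    (∃ a, σ = Equiv.addRight a) ∨ ∃ b, σ = Equiv.subLeft b := by
  obtain ⟨d, hσd⟩ : ∃ d : ZMod n → ZMod n, ∀ x, σ (x + 1) = σ x + d x :=
    ⟨fun x => σ (x + 1) - σ x, fun x => by ring⟩
  have hd : ∀ x, d x = 1 ∨ d x = -1 := by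
    intro x
    rcases cycleGraph_adj_iff.mp ((hσ x (x + 1)).mpr (cycleGraph_adj_iff.mpr (.inl rfl))) with h | h
    · left; linear_combination h - hσd x
    · right; linear_combination -h - hσd x
  -- If the step changed sign, `σ (x + 2) = σ x`; then `2 = 0`, and `1 = -1` anyway.
  have hd_succ : ∀ x, d (x + 1) = d x := by
    intro x
    have hsign : d (x + 1) = d x ∨ d (x + 1) = -d x := by
      rcases hd x with h | h <;> rcases hd (x + 1) with h' | h' <;> simp [h, h']
    refine hsign.elim id fun hneg => ?_
    have h2 : (2 : ZMod n) = 0 := by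
      linear_combination σ.injective (by linear_combination hσd (x + 1) + hσd x + hneg :
        σ (x + 1 + 1) = σ x)
    linear_combination hneg - d x * h2
  have hd_const : ∀ k : ℕ, d k = d 0 := by
    intro k
    induction k with
    | zero => simp
    | succ k ih => rw [Nat.cast_succ, hd_succ, ih]
  have hσ_lin : ∀ x, σ x = σ 0 + x * d 0 := by
    intro x
    obtain ⟨k, rfl⟩ := ZMod.natCast_zmod_surjective x
    induction k with
    | zero => simp
    | succ k ih => rw [Nat.cast_succ, hσd, ih, hd_const]; ring
  rcases hd 0 with h | h
  · exact .inl ⟨σ 0, Equiv.ext fun x => by simp [hσ_lin x, h, add_comm]⟩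
  · exact .inr ⟨σ 0, Equiv.ext fun x => by simp [hσ_lin x, h, sub_eq_add_neg]⟩

theorem distinguishingG_comp_toAddCircle [Nontrivial (ZMod n)] {c : Circle1 → Fin 2}
    (hc : DistinguishingC c) (h0 : ∀ x ∉ Set.range (ZMod.toAddCircle (N := n)), c x = 0) :
    DistinguishingG (CycleGraph n) (c ∘ ZMod.toAddCircle) := by
  intro σ hσ hσc
  obtain ⟨f, hf, hsemi, hrange⟩ := exists_isAutCirc_semiconj _ hσ.eq_addRight_or_eq_subLeft
  have hf_id := hc f hf (hsemi.apply_eq_of_const_off_range hrange h0 hσc)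
  ext v
  simpa [hf_id] using hsemi v

theorem FixingSetG.image_toAddCircle (h2 : (2 : ZMod n) ≠ 0) {W : Set (ZMod n)}
    (hW : FixingSetG (CycleGraph n) W) : FixingSetC (ZMod.toAddCircle '' W) := by
  have h1 : (1 : ZMod n) ≠ 0 := fun h => h2 (by linear_combination 2 * h)
  obtain ⟨w₀, hw₀, -⟩ := hW _ (isGraphAut_addRight 1) fun h => h1 (by simpa using congr($h 0))
  rintro f (⟨α, hα⟩ | ⟨β, hβ⟩) hf
  · have hα0 : α ≠ 0 := by
      rintro rfl
      exact hf (funext fun x => by simp [hα])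
    exact ⟨_, ⟨w₀, hw₀, rfl⟩, by simpa [hα] using hα0⟩
  -- A reflection fixing the image makes `w + w` constant on `W`, so the reflection of `C_n`
  -- at `w₀ + w₀` would fix `W`.
  · by_contra! hfix
    have hβ_eq : ∀ w ∈ W, β = ZMod.toAddCircle w + ZMod.toAddCircle w := fun w hw =>
      sub_eq_iff_eq_add.mp ((hβ _).symm.trans (hfix _ ⟨w, hw, rfl⟩))
    obtain ⟨s, hs, hs_moved⟩ := hW _ (isGraphAut_subLeft (w₀ + w₀)) (Equiv.subLeft_ne_one h2 _)
    refine hs_moved (ZMod.toAddCircle_injective n ?_)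
    rw [Equiv.subLeft_apply, map_sub, map_add, ← hβ_eq w₀ hw₀, hβ_eq s hs, add_sub_cancel_right]

end CycleGraph

/-- For every `n ≥ 6`, `ext_D(C_n; 2) ≤ ext_D(ℝ/ℤ, Aut(ℝ/ℤ); 2)`: every `m`
witnessing the extension property for the circle also witnesses it for `C_n`. -/
theorem extension_number_cycle_le_circle (n : ℕ) (hn : 6 ≤ n) :
    ∀ m : ℕ, ExtPropC m → ExtPropG (CycleGraph n) m := by
  have : NeZero n := ⟨by omega⟩
  have : Fact (1 < n) := ⟨by omega⟩
  have h2 : (2 : ZMod n) ≠ 0 := by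
    simpa using (ZMod.natCast_eq_zero_iff 2 n).not.mpr (Nat.not_dvd_of_pos_of_lt two_pos (by omega))
  intro m hC W hW hcard c
  have he := ZMod.toAddCircle_injective n
  obtain ⟨c', hc'W, hc'⟩ := hC _ (hW.image_toAddCircle h2)
    (by rwa [Cardinal.mk_image_eq he]) (Function.extend ZMod.toAddCircle c 0)
  refine ⟨c' ∘ ZMod.toAddCircle, fun v hv => ?_,
    distinguishingG_comp_toAddCircle hc' fun x hx => ?_⟩
  · rw [Function.comp_apply, hc'W _ (he.mem_set_image.not.mpr hv), he.extend_apply]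
  · rw [hc'W _ fun hxW => hx (Set.image_subset_range _ _ hxW), Function.extend_apply' _ _ _ hx,
      Pi.zero_apply]
end

section
/- ext_D(ℝ/ℤ, Aut(ℝ/ℤ); 2) ≥ 6. That is, there exists a fixing set W ⊆ ℝ/ℤ with |W| = 5 and a 2-coloring of (ℝ/ℤ)∖W that does not extend to any 2-coloring of ℝ/ℤ that is distinguishing with respect to Aut(ℝ/ℤ). -/
lemma circ_eq (x y : ℝ) : (x : Circle1) = y ↔ ∃ n : ℤ, x - y = n := by
  rw [← sub_eq_zero, ← AddCircle.coe_sub, AddCircle.coe_eq_zero_iff]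
  constructor
  · rintro ⟨n, hn⟩; exact ⟨n, by simpa using hn.symm⟩
  · rintro ⟨n, hn⟩; exact ⟨n, by simpa using hn.symm⟩

noncomputable def phi5 (i : ZMod 5) : Circle1 := ((i.val : ℝ) / 5 : ℝ)

lemma phi5_inj : Function.Injective phi5 := by
  intro i k h
  haveI : Fact ((0:ℝ) < 1) := ⟨one_pos⟩
  have hi : (i.val : ℝ)/5 ∈ Set.Ico (0:ℝ) (0 + 1) := by
    constructor
    · positivity
    · have : (i.val : ℝ) < 5 := by exact_mod_cast i.val_lt
      rw [div_lt_iff₀ (by norm_num : (0:ℝ) < 5)]; linarith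
  have hk : (k.val : ℝ)/5 ∈ Set.Ico (0:ℝ) (0 + 1) := by
    constructor
    · positivity
    · have : (k.val : ℝ) < 5 := by exact_mod_cast k.val_lt
      rw [div_lt_iff₀ (by norm_num : (0:ℝ) < 5)]; linarith
  have heq := (AddCircle.coe_eq_coe_iff_of_mem_Ico hi hk).mp h
  have hv : i.val = k.val := by
    field_simp at heq
    exact Nat.cast_injective heq
  exact ZMod.val_injective _ hv

lemma phi5_sub (j i : ZMod 5) : phi5 j - phi5 i = phi5 (j - i) := by
  unfold phi5
  rw [← AddCircle.coe_sub, circ_eq]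
  have h5 : ((5:ℕ):ℤ) ∣ ((j.val : ℤ) - (i.val : ℤ) - ((j-i).val : ℤ)) := by
    have hz : (((j.val : ℤ) - (i.val : ℤ) - ((j-i).val : ℤ) : ℤ) : ZMod 5) = 0 := by
      push_cast [ZMod.natCast_val, ZMod.cast_id]
      ring
    exact_mod_cast (ZMod.intCast_zmod_eq_zero_iff_dvd _ 5).mp hz
  obtain ⟨n, hn⟩ := h5
  refine ⟨n, ?_⟩
  have hr : ((j.val : ℝ) - (i.val : ℝ) - ((j-i).val : ℝ)) = ((5:ℤ) * n : ℤ) := by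
    exact_mod_cast congrArg (fun z : ℤ => (z : ℝ)) hn
  push_cast at hr ⊢
  linarith

lemma phi5_zero : phi5 0 = 0 := by
  unfold phi5; norm_num

set_option maxHeartbeats 1000000 in
lemma refl_exists : ∀ v : ZMod 5 → Fin 2, ∃ j : ZMod 5, ∀ i, v (j - i) = v i := by decide

/-- `ext_D(ℝ/ℤ, Aut(ℝ/ℤ); 2) ≥ 6`: there is a fixing set `W ⊆ ℝ/ℤ` with `|W| = 5`
and a `2`-coloring of `(ℝ/ℤ) \ W` with no distinguishing extension; consequently
every `m` witnessing the extension property for the circle satisfies `m ≥ 6`. -/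
theorem extension_number_circle_ge_six :
    (∃ W : Set Circle1, FixingSetC W ∧ W.ncard = 5 ∧
      ∃ c : Circle1 → Fin 2, ∀ c' : Circle1 → Fin 2,
        (∀ x ∉ W, c' x = c x) → ¬ DistinguishingC c') ∧
    (∀ m : ℕ, ExtPropC m → 6 ≤ m) := by
  classical
  set W : Set Circle1 := Set.range phi5 with hW
  have hfix : FixingSetC W := by
    rintro f (⟨α, hα⟩ | ⟨β, hβ⟩) hne
    · refine ⟨0, ⟨0, phi5_zero⟩, ?_⟩
      rw [hα 0, zero_add]
      intro h0
      exact hne (funext fun x => by rw [hα x, h0, add_zero]; rfl)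
    · by_cases hb : β = (0 : Circle1)
      · refine ⟨phi5 1, ⟨1, rfl⟩, ?_⟩
        rw [hβ, hb, ← phi5_zero, phi5_sub]
        intro h
        exact absurd (phi5_inj h) (by decide)
      · exact ⟨0, ⟨0, phi5_zero⟩, by rw [hβ 0, sub_zero]; exact hb⟩
  have hcard : W.ncard = 5 := by
    rw [hW, ← Set.image_univ, Set.ncard_image_of_injective _ phi5_inj, Set.ncard_univ]
    simp [Nat.card_eq_fintype_card]
  have hmain : ∀ c' : Circle1 → Fin 2,
      (∀ x ∉ W, c' x = (fun _ => (0 : Fin 2)) x) → ¬ DistinguishingC c' := by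
    intro c' hc' hdist
    obtain ⟨j, hj⟩ := refl_exists (fun i => c' (phi5 i))
    set g : Circle1 → Circle1 := fun x => phi5 j - x with hg
    have hgaut : IsAutCirc g := Or.inr ⟨phi5 j, fun x => rfl⟩
    have hpres : ∀ x, c' (g x) = c' x := by
      intro x
      by_cases hx : x ∈ W
      · obtain ⟨i, rfl⟩ := hx
        show c' (phi5 j - phi5 i) = c' (phi5 i)
        rw [phi5_sub]; exact hj i
      · have hgx : g x ∉ W := by
          rintro ⟨k, hk⟩
          apply hx
          refine ⟨j - k, ?_⟩
          rw [← phi5_sub, hk]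
          show phi5 j - (phi5 j - x) = x
          exact sub_sub_cancel _ _
        rw [hc' _ hgx, hc' _ hx]
    have hid := hdist g hgaut hpres
    have h0 : phi5 j = 0 := by
      have := congrFun hid 0
      simpa [hg] using this
    have hj0 : j = 0 := phi5_inj (by rw [h0, phi5_zero])
    have h1 : phi5 (j - 1) = phi5 1 := by
      rw [← phi5_sub]
      exact congrFun hid (phi5 1)
    have := phi5_inj h1
    rw [hj0] at this
    exact absurd this (by decide)
  refine ⟨⟨W, hfix, hcard, fun _ => (0 : Fin 2), hmain⟩, ?_⟩
  intro m hm
  by_contra hlt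
  push_neg at hlt
  have hmle : m ≤ 5 := by omega
  have hmkW : Cardinal.mk W = 5 := by
    rw [hW, Cardinal.mk_range_eq _ phi5_inj]
    simp [Cardinal.mk_fintype]
  obtain ⟨c', hext, hdist⟩ := hm W hfix (by
    rw [hmkW]
    exact_mod_cast Nat.cast_le.mpr hmle) (fun _ => (0 : Fin 2))
  exact hmain c' hext hdist
end

section
/- ext_D(C_10; 2) ≥ 6. That is, there exists a fixing set W ⊆ V(C_10) with |W| = 5 and a 2-coloring of V(C_10)∖W that does not extend to any distinguishing 2-coloring of C_10. -/
/- ### Auxiliary lemmas -/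

def Fc10 (t : Fin 2 × Fin 2 × Fin 2 × Fin 2 × Fin 2) (v : ZMod 10) : Fin 2 :=
  if v = 0 then t.1 else if v = 2 then t.2.1 else if v = 4 then t.2.2.1
  else if v = 6 then t.2.2.2.1 else if v = 8 then t.2.2.2.2 else 0

lemma key'_C10 : ∀ t : Fin 2 × Fin 2 × Fin 2 × Fin 2 × Fin 2, ∃ a : ZMod 10, a.val % 2 = 0 ∧
    ∀ v : ZMod 10, v.val % 2 = 0 → Fc10 t (a - v) = Fc10 t v := by decide

lemma evens_C10 : ∀ v : ZMod 10, v.val % 2 = 0 → v = 0 ∨ v = 2 ∨ v = 4 ∨ v = 6 ∨ v = 8 := by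
  decide

lemma par1_C10 : ∀ a v : ZMod 10, a.val % 2 = 0 → v.val % 2 = 1 → (a - v).val % 2 = 1 := by decide
lemma par0_C10 : ∀ a v : ZMod 10, a.val % 2 = 0 → v.val % 2 = 0 → (a - v).val % 2 = 0 := by decide

lemma agree_C10 (f : ZMod 10 → Fin 2) (v : ZMod 10) (hv : v.val % 2 = 0) :
    f v = Fc10 (f 0, f 2, f 4, f 6, f 8) v := by
  rcases evens_C10 v hv with h|h|h|h|h <;> subst h <;> rfl

lemma key_C10 (f : ZMod 10 → Fin 2) : ∃ a : ZMod 10, a.val % 2 = 0 ∧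
    ∀ v : ZMod 10, v.val % 2 = 0 → f (a - v) = f v := by
  obtain ⟨a, ha, hs⟩ := key'_C10 (f 0, f 2, f 4, f 6, f 8)
  exact ⟨a, ha, fun v hv => by
    rw [agree_C10 f v hv, agree_C10 f (a-v) (par0_C10 a v ha hv)]; exact hs v hv⟩

lemma adj_iff_C10 (u v : ZMod 10) :
    (CycleGraph 10).Adj u v ↔ u ≠ v ∧ (u - v = 1 ∨ v - u = 1) := by
  simp [CycleGraph]

lemma refl_aut_C10 (a : ZMod 10) : IsGraphAut (CycleGraph 10) (Equiv.subLeft a) := by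
  intro u v
  simp only [adj_iff_C10, Equiv.subLeft_apply]
  constructor
  · rintro ⟨h, h2 | h2⟩
    · exact ⟨fun e => h (by rw [e]), Or.inr (by linear_combination h2)⟩
    · exact ⟨fun e => h (by rw [e]), Or.inl (by linear_combination h2)⟩
  · rintro ⟨h, h2 | h2⟩
    · exact ⟨fun e => h (by linear_combination -e), Or.inr (by linear_combination h2)⟩
    · exact ⟨fun e => h (by linear_combination -e), Or.inl (by linear_combination h2)⟩

lemma refl_ne_one_C10 (a : ZMod 10) : Equiv.subLeft a ≠ 1 := by
  intro h
  have h0 := Equiv.ext_iff.mp h 0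
  have h1 := Equiv.ext_iff.mp h 1
  simp only [Equiv.subLeft_apply, Equiv.Perm.one_apply, sub_zero] at h0 h1
  subst h0
  revert h1; decide

lemma parn_C10 : ∀ v : ZMod 10, v.val % 2 = 1 → (v+1).val % 2 = 0 ∧ (v-1).val % 2 = 0 := by decide

lemma fix_C10 : ∀ σ : Equiv.Perm (ZMod 10), IsGraphAut (CycleGraph 10) σ →
    (∀ s : ZMod 10, s.val % 2 = 0 → σ s = s) → σ = 1 := by
  intro σ haut h
  apply Equiv.ext; intro v
  by_cases hv : v.val % 2 = 0
  · exact h v hv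
  · have hv1 : v.val % 2 = 1 := by omega
    obtain ⟨hp1, hp2⟩ := parn_C10 v hv1
    have adj1 : (CycleGraph 10).Adj v (v+1) := by
      rw [adj_iff_C10]
      exact ⟨fun e => (show (1:ZMod 10) ≠ 0 by decide) (by linear_combination -e),
        Or.inr (by ring)⟩
    have adj2 : (CycleGraph 10).Adj v (v-1) := by
      rw [adj_iff_C10]
      exact ⟨fun e => (show (1:ZMod 10) ≠ 0 by decide) (by linear_combination e),
        Or.inl (by ring)⟩
    have a1 := (haut v (v+1)).mpr adj1
    have a2 := (haut v (v-1)).mpr adj2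
    rw [h (v+1) hp1, adj_iff_C10] at a1
    rw [h (v-1) hp2, adj_iff_C10] at a2
    have c1 : σ v = v + 2 ∨ σ v = v := by
      rcases a1.2 with h2 | h2
      · exact Or.inl (by linear_combination h2)
      · exact Or.inr (by linear_combination -h2)
    have c2 : σ v = v - 2 ∨ σ v = v := by
      rcases a2.2 with h2 | h2
      · exact Or.inr (by linear_combination h2)
      · exact Or.inl (by linear_combination -h2)
    rcases c1 with e1 | e1
    · rcases c2 with e2 | e2
      · exact absurd (show (4:ZMod 10) = 0 by linear_combination e2 - e1) (by decide)
      · exact e2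
    · exact e1

/-- `ext_D(C_10; 2) ≥ 6`: there is a fixing set `W ⊆ V(C_10)` with `|W| = 5` and a
`2`-coloring of `V(C_10) \ W` that does not extend to any distinguishing
`2`-coloring of `C_10`; consequently every `m` witnessing the extension property
for `C_10` satisfies `m ≥ 6`. -/
theorem extension_number_C10_ge_six :
    (∃ W : Set (ZMod 10), FixingSetG (CycleGraph 10) W ∧ W.ncard = 5 ∧
      ∃ c : ZMod 10 → Fin 2, ∀ c' : ZMod 10 → Fin 2,
        (∀ v ∉ W, c' v = c v) → ¬ DistinguishingG (CycleGraph 10) c') ∧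
    (∀ m : ℕ, ExtPropG (CycleGraph 10) m → 6 ≤ m) := by
  set W : Set (ZMod 10) := {v | v.val % 2 = 0} with hWdef
  have hWF : W = (↑({0,2,4,6,8} : Finset (ZMod 10)) : Set (ZMod 10)) := by
    ext v; revert v; decide
  have hW5 : W.ncard = 5 := by rw [hWF, Set.ncard_coe_finset]; decide
  have hfix : FixingSetG (CycleGraph 10) W := by
    intro σ haut hne
    by_contra hc
    push_neg at hc
    exact hne (fix_C10 σ haut (fun s hs => hc s hs))
  have hmain : ∀ c' : ZMod 10 → Fin 2, (∀ v ∉ W, c' v = (fun _ => (0 : Fin 2)) v) →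
      ¬ DistinguishingG (CycleGraph 10) c' := by
    intro c' hc' hd
    obtain ⟨a, ha, hs⟩ := key_C10 c'
    refine refl_ne_one_C10 a (hd (Equiv.subLeft a) (refl_aut_C10 a) ?_)
    intro v
    simp only [Equiv.subLeft_apply]
    by_cases hv : v.val % 2 = 0
    · exact hs v hv
    · have hv1 : v.val % 2 = 1 := by omega
      have h1 : c' v = 0 := hc' v (by simpa [hWdef] using hv)
      have h2 : c' (a - v) = 0 := by
        have := par1_C10 a v ha hv1
        exact hc' (a - v) (by simp only [hWdef, Set.mem_setOf_eq]; omega)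
      rw [h1, h2]
  constructor
  · exact ⟨W, hfix, hW5, fun _ => 0, hmain⟩
  · intro m hm
    by_contra hlt
    push_neg at hlt
    have hm5 : m ≤ 5 := by omega
    have hcard : (m : Cardinal) ≤ Cardinal.mk W := by
      have : Cardinal.mk W = ((5 : ℕ) : Cardinal) := by
        rw [hWF]
        have h5 : ({0,2,4,6,8} : Finset (ZMod 10)).card = 5 := by decide
        simp only [Finset.coe_sort_coe, Cardinal.mk_coe_finset, h5]
      rw [this]
      exact_mod_cast hm5
    obtain ⟨c', hext, hdist⟩ := hm W hfix hcard (fun _ => 0)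
    exact hmain c' hext hdist
end

section
/- If n ≥ 8 and 4 divides n, then ext_D(C_n; 2) ≥ 5. -/
lemma cycle_adj (n : ℕ) (u v : ZMod n) :
    (CycleGraph n).Adj u v ↔ u ≠ v ∧ (u - v = 1 ∨ v - u = 1) := by
  simp [CycleGraph, SimpleGraph.fromRel_adj]

/-- Every automorphism of the cycle graph is a rotation or a reflection. -/
lemma cycle_aut_form (n : ℕ) (hn : 3 ≤ n) (σ : Equiv.Perm (ZMod n))
    (h : IsGraphAut (CycleGraph n) σ) :
    (∀ x, σ x = σ 0 + x) ∨ (∀ x, σ x = σ 0 - x) := by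
  haveI : NeZero n := ⟨by omega⟩
  have h1 : (1 : ZMod n) ≠ 0 := by
    have : ((1 : ℕ) : ZMod n) ≠ 0 := by
      rw [Ne, ZMod.natCast_eq_zero_iff]
      intro hd; have := Nat.le_of_dvd (by omega) hd; omega
    simpa using this
  have h2 : (2 : ZMod n) ≠ 0 := by
    have : ((2 : ℕ) : ZMod n) ≠ 0 := by
      rw [Ne, ZMod.natCast_eq_zero_iff]
      intro hd; have := Nat.le_of_dvd (by omega) hd; omega
    simpa using this
  have key : ∀ e : ZMod n, (e = 1 ∨ e = -1) → σ 1 = σ 0 + e → ∀ x, σ x = σ 0 + e * x := by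
    intro e he h1e
    have step : ∀ j : ℕ, σ (j : ZMod n) = σ 0 + e * j
        ∧ σ ((j : ZMod n) + 1) = σ 0 + e * ((j : ZMod n) + 1) := by
      intro j
      induction j with
      | zero => exact ⟨by simp, by simpa using h1e⟩
      | succ j ih =>
        obtain ⟨hj, hj1⟩ := ih
        have hcast : ((j + 1 : ℕ) : ZMod n) = (j : ZMod n) + 1 := by push_cast; ring
        rw [hcast]
        refine ⟨hj1, ?_⟩
        have hadj2 : (CycleGraph n).Adj ((j : ZMod n) + 1) ((j : ZMod n) + 1 + 1) := by
          rw [cycle_adj]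
          refine ⟨fun hq => h1 (by linear_combination -hq), Or.inr (by ring)⟩
        have hadjs := (h _ _).mpr hadj2
        rw [cycle_adj] at hadjs
        obtain ⟨hne, hc⟩ := hadjs
        have hinj : σ ((j : ZMod n) + 1 + 1) ≠ σ (j : ZMod n) := by
          intro hq
          have := σ.injective hq
          exact h2 (by linear_combination this)
        rcases he with rfl | rfl
        · rcases hc with hc | hc
          · exact absurd (by linear_combination hj1 - hj - hc) hinj
          · linear_combination hc + hj1
        · rcases hc with hc | hc
          · linear_combination -hc + hj1
          · exact absurd (by linear_combination hc + hj1 - hj) hinj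
    intro x
    obtain ⟨j, rfl⟩ := ZMod.natCast_zmod_surjective x
    exact (step j).1
  have h01 : (CycleGraph n).Adj 0 1 := by
    rw [cycle_adj]; exact ⟨fun hq => h1 hq.symm, Or.inr (by ring)⟩
  have hadjs := (h 0 1).mpr h01
  rw [cycle_adj] at hadjs
  obtain ⟨-, hc | hc⟩ := hadjs
  · right
    intro x
    have := key (-1) (Or.inr rfl) (by linear_combination -hc) x
    rw [this]; ring
  · left
    intro x
    have := key 1 (Or.inl rfl) (by linear_combination hc) x
    rw [this]; ring

/-- The reflection `x ↦ t - x` as a permutation. -/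
def reflPerm (n : ℕ) (t : ZMod n) : Equiv.Perm (ZMod n) :=
  Function.Involutive.toPerm (fun x => t - x) (fun x => by simp)

lemma reflPerm_apply (n : ℕ) (t x : ZMod n) : reflPerm n t x = t - x := rfl

lemma reflPerm_aut (n : ℕ) (t : ZMod n) : IsGraphAut (CycleGraph n) (reflPerm n t) := by
  intro u v
  rw [cycle_adj, cycle_adj, reflPerm_apply, reflPerm_apply]
  have e1 : (t - u) - (t - v) = v - u := by ring
  have e2 : (t - v) - (t - u) = u - v := by ring
  rw [e1, e2]
  constructor
  · rintro ⟨hne, hc⟩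
    exact ⟨fun hq => hne (by rw [hq]), hc.symm⟩
  · rintro ⟨hne, hc⟩
    exact ⟨fun hq => hne (by linear_combination -hq), hc.symm⟩

lemma fin2_cases : ∀ a b c d : Fin 2,
    b = d ∨ a = c ∨ (a = b ∧ c = d) ∨ (a = d ∧ b = c) := by decide

/-- If `n ≥ 8` and `4 ∣ n`, then `ext_D(C_n; 2) ≥ 5`: every `m` witnessing the
extension property for `C_n` satisfies `m ≥ 5`. -/
theorem extension_number_cycle_four_dvd (n : ℕ) (hn : 8 ≤ n) (hdvd : 4 ∣ n) :
    ∀ m : ℕ, ExtPropG (CycleGraph n) m → 5 ≤ m := by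
  obtain ⟨q, rfl⟩ := hdvd
  intro m hm
  by_contra hlt
  push_neg at hlt
  have hq2 : 2 ≤ q := by omega
  haveI : NeZero (4 * q) := ⟨by omega⟩
  set k : ZMod (4 * q) := ((q : ℕ) : ZMod (4 * q)) with hk_def
  have hk4 : (4 : ZMod (4 * q)) * k = 0 := by
    have h := ZMod.natCast_self (4 * q)
    push_cast at h
    exact h
  have hk0 : k ≠ 0 := by
    intro hq
    rw [hk_def, ZMod.natCast_eq_zero_iff] at hq
    have := Nat.le_of_dvd (by omega) hq; omega
  have h2k0 : 2 * k ≠ 0 := by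
    intro hq
    have h2 : ((2 * q : ℕ) : ZMod (4 * q)) = 0 := by push_cast; linear_combination hq
    rw [ZMod.natCast_eq_zero_iff] at h2
    have := Nat.le_of_dvd (by omega) h2; omega
  have h3k0 : 3 * k ≠ 0 := by
    intro hq
    have h3 : ((3 * q : ℕ) : ZMod (4 * q)) = 0 := by push_cast; linear_combination hq
    rw [ZMod.natCast_eq_zero_iff] at h3
    have := Nat.le_of_dvd (by omega) h3; omega
  have h2Z : (2 : ZMod (4 * q)) ≠ 0 := by
    intro hq
    have h2 : ((2 : ℕ) : ZMod (4 * q)) = 0 := by push_cast; exact hq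
    rw [ZMod.natCast_eq_zero_iff] at h2
    have := Nat.le_of_dvd (by omega) h2; omega
  set W : Set (ZMod (4 * q)) := {0, k, 2 * k, 3 * k} with hW_def
  have hWmem : ∀ x : ZMod (4 * q), x ∈ W ↔ x = 0 ∨ x = k ∨ x = 2 * k ∨ x = 3 * k := by
    intro x
    simp [hW_def, Set.mem_insert_iff, Set.mem_singleton_iff]
  -- W is a fixing set
  have hfix : FixingSetG (CycleGraph (4 * q)) W := by
    intro σ haut hne1
    rcases cycle_aut_form (4 * q) (by omega) σ haut with hf | hf
    · by_cases h0 : σ 0 = 0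
      · exact absurd (Equiv.ext fun x => by rw [hf x, h0, zero_add]; rfl) hne1
      · exact ⟨0, (hWmem 0).mpr (Or.inl rfl), h0⟩
    · by_cases h0 : σ 0 = 0
      · refine ⟨k, (hWmem k).mpr (Or.inr (Or.inl rfl)), ?_⟩
        intro hkfix
        have hfk := hf k
        rw [h0, hkfix] at hfk
        exact h2k0 (by linear_combination hfk)
      · exact ⟨0, (hWmem 0).mpr (Or.inl rfl), h0⟩
  -- W has cardinality 4 ≥ m
  have hcard : (m : Cardinal) ≤ Cardinal.mk W := by
    have hne1 : (0 : ZMod (4 * q)) ≠ k := fun h => hk0 h.symm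
    have hne2 : (0 : ZMod (4 * q)) ≠ 2 * k := fun h => h2k0 h.symm
    have hne3 : (0 : ZMod (4 * q)) ≠ 3 * k := fun h => h3k0 h.symm
    have hne4 : k ≠ 2 * k := fun h => hk0 (by linear_combination -h)
    have hne5 : k ≠ 3 * k := fun h => h2k0 (by linear_combination -h)
    have hne6 : 2 * k ≠ 3 * k := fun h => hk0 (by linear_combination -h)
    have hWfin : W = (↑({0, k, 2 * k, 3 * k} : Finset (ZMod (4 * q))) : Set (ZMod (4 * q))) := by
      simp [hW_def]
    rw [hWfin]
    simp only [Finset.coe_sort_coe, Cardinal.mk_coe_finset]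
    have hcard4 : ({0, k, 2 * k, 3 * k} : Finset (ZMod (4 * q))).card = 4 := by
      rw [Finset.card_insert_of_notMem (by simp [hne1, hne2, hne3]),
        Finset.card_insert_of_notMem (by simp [hne4, hne5]),
        Finset.card_insert_of_notMem (by simp [hne6]), Finset.card_singleton]
    rw [hcard4]
    exact_mod_cast Nat.cast_le.mpr (by omega : m ≤ 4)
  obtain ⟨c', hc'out, hdist⟩ := hm W hfix hcard (fun _ => 0)
  have houtside : ∀ v ∉ W, c' v = 0 := fun v hv => hc'out v hv
  -- W is closed under subtraction
  have hsub : ∀ a ∈ W, ∀ b ∈ W, a - b ∈ W := by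
    intro a ha b hb
    rw [hWmem] at ha hb ⊢
    rcases ha with rfl | rfl | rfl | rfl <;> rcases hb with rfl | rfl | rfl | rfl <;>
      first
      | exact Or.inl (by linear_combination)
      | exact Or.inl (by linear_combination hk4)
      | exact Or.inl (by linear_combination -hk4)
      | exact Or.inr (Or.inl (by linear_combination))
      | exact Or.inr (Or.inl (by linear_combination hk4))
      | exact Or.inr (Or.inl (by linear_combination -hk4))
      | exact Or.inr (Or.inr (Or.inl (by linear_combination)))
      | exact Or.inr (Or.inr (Or.inl (by linear_combination hk4)))
      | exact Or.inr (Or.inr (Or.inl (by linear_combination -hk4)))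
      | exact Or.inr (Or.inr (Or.inr (by linear_combination)))
      | exact Or.inr (Or.inr (Or.inr (by linear_combination hk4)))
      | exact Or.inr (Or.inr (Or.inr (by linear_combination -hk4)))
  have hclosed : ∀ t ∈ W, ∀ v, (t - v ∈ W ↔ v ∈ W) := by
    intro t ht v
    constructor
    · intro hw
      have h2 := hsub t ht _ hw
      simpa using h2
    · intro hv; exact hsub t ht v hv
  -- Any reflection around a point of W preserving c' on W gives a contradiction
  have hrefl : ∀ t ∈ W, (∀ v ∈ W, c' (t - v) = c' v) → False := by
    intro t ht hWc
    have hpres : ∀ v, c' (reflPerm (4 * q) t v) = c' v := by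
      intro v
      rw [reflPerm_apply]
      by_cases hv : v ∈ W
      · exact hWc v hv
      · rw [houtside _ (fun hw => hv ((hclosed t ht v).mp hw)), houtside _ hv]
    have h1 := hdist _ (reflPerm_aut (4 * q) t) hpres
    have e0 : t = 0 := by
      have := congrArg (fun f : Equiv.Perm (ZMod (4 * q)) => f 0) h1
      simpa [reflPerm_apply] using this
    have e1 : t - 1 = 1 := by
      have := congrArg (fun f : Equiv.Perm (ZMod (4 * q)) => f 1) h1
      simpa [reflPerm_apply] using this
    rw [e0] at e1
    exact h2Z (by linear_combination -e1)
  -- Case analysis on the colors of W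
  rcases fin2_cases (c' 0) (c' k) (c' (2 * k)) (c' (3 * k)) with
    hcc | hcc | ⟨hcc1, hcc2⟩ | ⟨hcc1, hcc2⟩
  · refine hrefl 0 ((hWmem 0).mpr (Or.inl rfl)) ?_
    intro v hv
    rw [hWmem] at hv
    rcases hv with rfl | rfl | rfl | rfl
    · rw [show (0 : ZMod (4 * q)) - 0 = 0 from by ring]
    · rw [show (0 : ZMod (4 * q)) - k = 3 * k from by linear_combination -hk4]
      exact hcc.symm
    · rw [show (0 : ZMod (4 * q)) - 2 * k = 2 * k from by linear_combination -hk4]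
    · rw [show (0 : ZMod (4 * q)) - 3 * k = k from by linear_combination -hk4]
      exact hcc
  · refine hrefl (2 * k) ((hWmem (2 * k)).mpr (Or.inr (Or.inr (Or.inl rfl)))) ?_
    intro v hv
    rw [hWmem] at hv
    rcases hv with rfl | rfl | rfl | rfl
    · rw [show (2 * k : ZMod (4 * q)) - 0 = 2 * k from by ring]
      exact hcc.symm
    · rw [show (2 * k : ZMod (4 * q)) - k = k from by ring]
    · rw [show (2 * k : ZMod (4 * q)) - 2 * k = 0 from by ring]
      exact hcc
    · rw [show (2 * k : ZMod (4 * q)) - 3 * k = 3 * k from by linear_combination -hk4]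
  · refine hrefl k ((hWmem k).mpr (Or.inr (Or.inl rfl))) ?_
    intro v hv
    rw [hWmem] at hv
    rcases hv with rfl | rfl | rfl | rfl
    · rw [show (k : ZMod (4 * q)) - 0 = k from by ring]
      exact hcc1.symm
    · rw [show (k : ZMod (4 * q)) - k = 0 from by ring]
      exact hcc1
    · rw [show (k : ZMod (4 * q)) - 2 * k = 3 * k from by linear_combination -hk4]
      exact hcc2.symm
    · rw [show (k : ZMod (4 * q)) - 3 * k = 2 * k from by linear_combination -hk4]
      exact hcc2
  · refine hrefl (3 * k) ((hWmem (3 * k)).mpr (Or.inr (Or.inr (Or.inr rfl)))) ?_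
    intro v hv
    rw [hWmem] at hv
    rcases hv with rfl | rfl | rfl | rfl
    · rw [show (3 * k : ZMod (4 * q)) - 0 = 3 * k from by ring]
      exact hcc1.symm
    · rw [show (3 * k : ZMod (4 * q)) - k = 2 * k from by ring]
      exact hcc2.symm
    · rw [show (3 * k : ZMod (4 * q)) - 2 * k = k from by ring]
      exact hcc2
    · rw [show (3 * k : ZMod (4 * q)) - 3 * k = 0 from by ring]
      exact hcc1
end

section
/- If n ≥ 10 and 5 divides n, then ext_D(C_n; 2) ≥ 6. -/
/-- Every 2-coloring of 5 points on a cycle has a reflective symmetry. -/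
lemma refl5 : ∀ f : ZMod 5 → Fin 2, ∃ j : ZMod 5, ∀ i, f (j - i) = f i := by decide

lemma cycleAdj {n : ℕ} {u v : ZMod n} :
    (CycleGraph n).Adj u v ↔ u ≠ v ∧ (u - v = 1 ∨ v - u = 1) := by
  simp [CycleGraph]

lemma cycle_two_ne_zero {n : ℕ} (hn : 10 ≤ n) : (2 : ZMod n) ≠ 0 := by
  intro h
  have h2 : ((2 : ℕ) : ZMod n) = 0 := by push_cast; exact h
  rw [ZMod.natCast_eq_zero_iff] at h2
  exact absurd (Nat.le_of_dvd (by norm_num) h2) (by omega)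

lemma cycle_one_ne_zero {n : ℕ} (hn : 10 ≤ n) : (1 : ZMod n) ≠ 0 := by
  intro h
  have h2 : ((1 : ℕ) : ZMod n) = 0 := by push_cast; exact h
  rw [ZMod.natCast_eq_zero_iff] at h2
  exact absurd (Nat.le_of_dvd (by norm_num) h2) (by omega)

lemma cycle_neighbor {n : ℕ} {u v : ZMod n} (h : (CycleGraph n).Adj u v) :
    v = u + 1 ∨ v = u - 1 := by
  rw [cycleAdj] at h
  rcases h.2 with h' | h'
  · right; linear_combination -h'
  · left; linear_combination h'

/-- Classification of automorphisms fixing 0. -/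
lemma cycle_aut_fix_zero {n : ℕ} (hn : 10 ≤ n) (σ : Equiv.Perm (ZMod n))
    (haut : IsGraphAut (CycleGraph n) σ) (h0 : σ 0 = 0) :
    (∀ x, σ x = x) ∨ (∀ x, σ x = -x) := by
  haveI : NeZero n := ⟨by omega⟩
  have h2 : (2 : ZMod n) ≠ 0 := cycle_two_ne_zero hn
  have h1 : (1 : ZMod n) ≠ 0 := cycle_one_ne_zero hn
  have hadj01 : (CycleGraph n).Adj 0 1 := by
    rw [cycleAdj]; exact ⟨fun h => h1 h.symm, Or.inr (by ring)⟩
  have hσ1 : σ 1 = 1 ∨ σ 1 = -1 := by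
    have hnb := cycle_neighbor ((haut 0 1).mpr hadj01)
    rw [h0] at hnb
    rcases hnb with h | h
    · left; rw [h]; ring
    · right; rw [h]; ring
  have key : ∀ (s : ZMod n), σ 1 = s → (s = 1 ∨ s = -1) →
      ∀ i : ℕ, σ (i : ZMod n) = s * (i : ZMod n) ∧
        σ ((i + 1 : ℕ) : ZMod n) = s * ((i + 1 : ℕ) : ZMod n) := by
    intro s hs hsval i
    induction i with
    | zero =>
        refine ⟨?_, ?_⟩
        · push_cast; rw [h0]; ring
        · push_cast; rw [hs]; ring
    | succ i ih =>
        refine ⟨ih.2, ?_⟩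
        have hadj : (CycleGraph n).Adj ((i + 1 : ℕ) : ZMod n) ((i + 2 : ℕ) : ZMod n) := by
          rw [cycleAdj]
          constructor
          · intro h
            apply h1
            have hd : ((i + 2 : ℕ) : ZMod n) - ((i + 1 : ℕ) : ZMod n) = 1 := by
              push_cast; ring
            rw [h] at hd; linear_combination -hd
          · right; push_cast; ring
        have hnb := cycle_neighbor ((haut _ _).mpr hadj)
        rw [ih.2] at hnb
        rcases hnb with h | h
        · rcases hsval with rfl | rfl
          · rw [h]; push_cast; ring
          · exfalso
            have heq : σ ((i + 2 : ℕ) : ZMod n) = σ ((i : ℕ) : ZMod n) := by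
              rw [h, ih.1]; push_cast; ring
            have hinj := σ.injective heq
            apply h2
            calc (2 : ZMod n) = ((i + 2 : ℕ) : ZMod n) - ((i : ℕ) : ZMod n) := by
                  push_cast; ring
              _ = 0 := by rw [hinj]; ring
        · rcases hsval with rfl | rfl
          · exfalso
            have heq : σ ((i + 2 : ℕ) : ZMod n) = σ ((i : ℕ) : ZMod n) := by
              rw [h, ih.1]; push_cast; ring
            have hinj := σ.injective heq
            apply h2
            calc (2 : ZMod n) = ((i + 2 : ℕ) : ZMod n) - ((i : ℕ) : ZMod n) := by
                  push_cast; ring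
              _ = 0 := by rw [hinj]; ring
          · rw [h]; push_cast; ring
  rcases hσ1 with hs | hs
  · left
    intro x
    have hx := (key 1 hs (Or.inl rfl) x.val).1
    rwa [ZMod.natCast_rightInverse x, one_mul] at hx
  · right
    intro x
    have hx := (key (-1) hs (Or.inr rfl) x.val).1
    rwa [ZMod.natCast_rightInverse x, neg_one_mul] at hx

/-- If `n ≥ 10` and `5 ∣ n`, then `ext_D(C_n; 2) ≥ 6`: every `m` witnessing the
extension property for `C_n` satisfies `m ≥ 6`. -/
theorem extension_number_cycle_five_dvd (n : ℕ) (hn : 10 ≤ n) (hdvd : 5 ∣ n) :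
    ∀ m : ℕ, ExtPropG (CycleGraph n) m → 6 ≤ m := by
  obtain ⟨k, rfl⟩ := hdvd
  have hk : 2 ≤ k := by omega
  intro m hm
  by_contra hlt
  push_neg at hlt
  have hm5 : m ≤ 5 := by omega
  haveI : NeZero (5 * k) := ⟨by omega⟩
  set n := 5 * k with hn_def
  set e : ZMod 5 → ZMod n := fun a => ((a.val * k : ℕ) : ZMod n) with he
  have e_add : ∀ a b : ZMod 5, e (a + b) = e a + e b := by
    intro a b
    show (((a + b).val * k : ℕ) : ZMod n) = ((a.val * k : ℕ) : ZMod n) + ((b.val * k : ℕ) : ZMod n)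
    rw [← Nat.cast_add, ← add_mul, ZMod.natCast_eq_natCast_iff]
    have h5 : (a + b).val ≡ a.val + b.val [MOD 5] := by
      rw [ZMod.val_add]; exact (Nat.mod_modEq _ 5)
    exact h5.mul_right' k
  have e_zero : e 0 = 0 := by
    show (((0 : ZMod 5).val * k : ℕ) : ZMod n) = 0
    simp [ZMod.val_zero]
  have e_neg : ∀ a : ZMod 5, e (-a) = -(e a) := by
    intro a
    have h := e_add a (-a)
    rw [add_neg_cancel, e_zero] at h
    linear_combination -h
  have e_inj : Function.Injective e := by
    intro a b hab
    have hva : a.val * k < n := by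
      have := a.val_lt; simp only [hn_def]; nlinarith
    have hvb : b.val * k < n := by
      have := b.val_lt; simp only [hn_def]; nlinarith
    simp only [he] at hab
    have hv := congrArg ZMod.val hab
    rw [ZMod.val_cast_of_lt hva, ZMod.val_cast_of_lt hvb] at hv
    have : a.val = b.val := Nat.eq_of_mul_eq_mul_right (by omega) hv
    exact ZMod.val_injective _ this
  set W : Set (ZMod n) := Set.range e with hW
  have hfix : FixingSetG (CycleGraph n) W := by
    intro σ haut hne
    by_contra h
    push_neg at h
    have h0 : σ 0 = 0 := by
      have := h (e 0) ⟨0, rfl⟩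
      rwa [e_zero] at this
    have hk0 : σ (e 1) = e 1 := h (e 1) ⟨1, rfl⟩
    rcases cycle_aut_fix_zero (by omega) σ haut h0 with hid | hneg
    · exact hne (Equiv.ext hid)
    · have h1' := hneg (e 1)
      rw [hk0] at h1'
      have h2k : (2 : ZMod n) * e 1 = 0 := by linear_combination h1'
      have he1 : e 1 = ((k : ℕ) : ZMod n) := by
        show (((1 : ZMod 5).val * k : ℕ) : ZMod n) = ((k : ℕ) : ZMod n)
        have hv1 : (1 : ZMod 5).val = 1 := rfl
        rw [hv1, one_mul]
      rw [he1] at h2k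
      have hz : ((2 * k : ℕ) : ZMod n) = 0 := by push_cast; linear_combination h2k
      rw [ZMod.natCast_eq_zero_iff] at hz
      have := Nat.le_of_dvd (by omega) hz
      omega
  have hcard : (m : Cardinal) ≤ Cardinal.mk W := by
    have hmk : Cardinal.mk W = 5 := by
      rw [hW, Cardinal.mk_range_eq e e_inj, Cardinal.mk_fintype]
      simp [ZMod.card]
    rw [hmk]
    exact_mod_cast Nat.cast_le.mpr hm5
  obtain ⟨c', hcomp, hdist⟩ := hm W hfix hcard (fun _ => 0)
  obtain ⟨j, hj⟩ := refl5 (fun a => c' (e a))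
  set σ : Equiv.Perm (ZMod n) := Equiv.subLeft (e j) with hσ
  have haut : IsGraphAut (CycleGraph n) σ := by
    intro u v
    rw [cycleAdj, cycleAdj]
    simp only [hσ, Equiv.subLeft_apply]
    constructor
    · rintro ⟨hne, hor⟩
      refine ⟨fun h => hne (by rw [h]), ?_⟩
      rcases hor with h | h
      · right; linear_combination h
      · left; linear_combination h
    · rintro ⟨hne, hor⟩
      refine ⟨fun h => hne (by linear_combination -h), ?_⟩
      rcases hor with h | h
      · right; linear_combination h
      · left; linear_combination h
  have hpres : ∀ v, c' (σ v) = c' v := by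
    intro v
    simp only [hσ, Equiv.subLeft_apply]
    by_cases hv : v ∈ W
    · obtain ⟨i, rfl⟩ := hv
      have hrw : e j - e i = e (j - i) := by
        rw [sub_eq_add_neg j i, e_add, e_neg, ← sub_eq_add_neg]
      rw [hrw]
      exact hj i
    · have hout : e j - v ∉ W := by
        rintro ⟨i, hi⟩
        apply hv
        refine ⟨j - i, ?_⟩
        rw [sub_eq_add_neg j i, e_add, e_neg, ← sub_eq_add_neg, hi]
        ring
      rw [hcomp _ hout, hcomp _ hv]
  have hσ1 : σ = 1 := hdist σ haut hpres
  have hz0 : σ 0 = 0 := by rw [hσ1]; rfl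
  have hz1 : σ 1 = 1 := by rw [hσ1]; rfl
  simp only [hσ, Equiv.subLeft_apply, sub_zero] at hz0
  simp only [hσ, Equiv.subLeft_apply, hz0] at hz1
  have h20 : (2 : ZMod n) = 0 := by linear_combination -hz1
  exact cycle_two_ne_zero (by omega) h20
end

section
/- Let W ⊂ ℝ/ℤ satisfy the Divisibility Condition with |W| ≤ 4, and let σ be a nontrivial rotation of ℝ/ℤ (a map x ↦ x + α with α ∉ ℤ). Then every orbit of σ on ℝ/ℤ contains at least one element not in W; moreover, if σ has order at least 3 (including infinite order), then every orbit of σ contains at least two elements not in W. -/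
/-
If `α` has order `n ∈ {2, 3, 4, 5}`, every nonzero difference of two points of an orbit is a
nonzero `n`-torsion point, i.e. some `i/n`, so the Divisibility Condition lets each orbit meet `W`
in at most one point; the orbit has `n ≥ 2` points, and `n ≥ 3` of them give two outside `W`.
Otherwise `x, x + α, …, x + 5α` are six distinct points, and at most four of them lie in `W`.
-/

section Counting

variable {β : Type*} {f : ℕ → β} {m : ℕ} {s : Set β}

lemma ncard_image_Iio_of_injOn (hf : Set.InjOn f (Set.Iio m)) : (f '' Set.Iio m).ncard = m := by
  rw [hf.ncard_image, ← Finset.coe_range, Set.ncard_coe_finset, Finset.card_range]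

lemma exists_notMem_of_injOn (hf : Set.InjOn f (Set.Iio m)) (hs : s.Finite) (h : s.ncard < m) :
    ∃ i, f i ∉ s := by
  rw [← ncard_image_Iio_of_injOn hf] at h
  obtain ⟨_, ⟨i, -, rfl⟩, hi⟩ := Set.exists_mem_notMem_of_ncard_lt_ncard h hs
  exact ⟨i, hi⟩

lemma exists_pair_notMem_of_injOn (hf : Set.InjOn f (Set.Iio m)) (hs : s.Finite)
    (h : s.ncard + 2 ≤ m) : ∃ i j, f i ≠ f j ∧ f i ∉ s ∧ f j ∉ s := by
  have hcard : 1 < (f '' Set.Iio m \ s).ncard := by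
    have := Set.le_ncard_sdiff s (f '' Set.Iio m) hs
    rw [ncard_image_Iio_of_injOn hf] at this
    omega
  obtain ⟨_, _, ⟨⟨i, -, rfl⟩, hi⟩, ⟨⟨j, -, rfl⟩, hj⟩, hij⟩ :=
    (Set.one_lt_ncard_iff ((Set.finite_Iio m).image f).sdiff).1 hcard
  exact ⟨i, j, hij, hi, hj⟩

end Counting

lemma injOn_add_natCast_zsmul_Iio {G : Type*} [AddGroup G] (x α : G) {m : ℕ}
    (h : addOrderOf α = 0 ∨ m ≤ addOrderOf α) :
    Set.InjOn (fun i : ℕ => x + (i : ℤ) • α) (Set.Iio m) := by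
  simp only [natCast_zsmul]
  refine (add_right_injective x).comp_injOn ?_
  rcases h with h | h
  · exact (injective_nsmul_iff_not_isOfFinAddOrder.2 (addOrderOf_eq_zero_iff.1 h)).injOn
  · exact nsmul_injOn_Iio_addOrderOf.mono (Set.Iio_subset_Iio h)

namespace DivCond

variable {W : Set Circle1}

lemma add_notMem (hdiv : DivCond W) {n : ℕ} (hn : n ∈ ({2, 3, 4, 5} : Set ℕ)) {z : Circle1}
    (hz : n • z = 0) (hz0 : z ≠ 0) {w : Circle1} (hw : w ∈ W) : w + z ∉ W := by
  have hn0 : 0 < n := by simp only [Set.mem_insert_iff, Set.mem_singleton_iff] at hn; omega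
  obtain ⟨i, hin, rfl⟩ := (AddCircle.nsmul_eq_zero_iff hn0).1 hz
  have hi : 1 ≤ i := Nat.one_le_iff_ne_zero.2 fun h => hz0 (by simp [h])
  intro hwz
  have hmem : w + (((i : ℝ) / (n : ℝ) : ℝ) : Circle1) ∈
      (fun w => w + (((i : ℝ) / (n : ℝ) : ℝ) : Circle1)) '' W ∩ W :=
    ⟨⟨w, hw, rfl⟩, by rwa [mul_one] at hwz⟩
  rwa [hdiv n hn i hi hin] at hmem

lemma subsingleton_inter_orbit (hdiv : DivCond W) {α : Circle1}
    (hα : addOrderOf α ∈ ({2, 3, 4, 5} : Set ℕ)) (x : Circle1) :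
    (W ∩ Set.range fun j : ℤ => x + j • α).Subsingleton := by
  rintro _ ⟨ha, a, rfl⟩ _ ⟨hb, b, rfl⟩
  dsimp only at ha hb ⊢
  have hshift : x + a • α + (b - a) • α = x + b • α := by
    rw [add_assoc, ← add_zsmul, add_sub_cancel]
  by_contra hne
  refine hdiv.add_notMem hα ?_ (fun h => hne ?_) ha (by rwa [hshift])
  · rw [smul_comm, addOrderOf_nsmul_eq_zero, smul_zero]
  · rw [← hshift, h, add_zero]

end DivCond

/-- Let `W ⊂ ℝ/ℤ` satisfy the Divisibility Condition with `|W| ≤ 4`, and let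
`σ : x ↦ x + α` be a nontrivial rotation.  Then every `σ`-orbit
`{x + j • α : j ∈ ℤ}` contains an element not in `W`; and if moreover `σ` has
order at least `3` (where additive order `0` means infinite order), every
`σ`-orbit contains two distinct elements not in `W`. -/
theorem orbit_meets_complement (W : Set Circle1) (hWfin : W.Finite)
    (hW : W.ncard ≤ 4) (hdiv : DivCond W) (α : Circle1) (hα : α ≠ 0) :
    (∀ x : Circle1, ∃ j : ℤ, x + j • α ∉ W) ∧
    ((addOrderOf α = 0 ∨ 3 ≤ addOrderOf α) →
      ∀ x : Circle1, ∃ j j' : ℤ,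
        x + j • α ≠ x + j' • α ∧ x + j • α ∉ W ∧ x + j' • α ∉ W) := by
  have hα1 : addOrderOf α ≠ 1 := fun h => hα (AddMonoid.addOrderOf_eq_one_iff.1 h)
  by_cases hsmall : addOrderOf α ∈ ({2, 3, 4, 5} : Set ℕ)
  · have hα2 : 2 ≤ addOrderOf α := by
      simp only [Set.mem_insert_iff, Set.mem_singleton_iff] at hsmall; omega
    have hS x := hdiv.subsingleton_inter_orbit hsmall x
    have hS1 x := (Set.ncard_le_one (hS x).finite).2 (hS x)
    refine ⟨fun x => ?_, fun hord x => ?_⟩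
    · obtain ⟨i, hi⟩ := exists_notMem_of_injOn
        (injOn_add_natCast_zsmul_Iio x α (m := 2) (.inr hα2)) (hS x).finite
        (by linarith [hS1 x])
      exact ⟨i, fun h => hi ⟨h, i, rfl⟩⟩
    · obtain ⟨i, j, hij, hi, hj⟩ := exists_pair_notMem_of_injOn
        (injOn_add_natCast_zsmul_Iio x α (m := 3) (by omega)) (hS x).finite
        (by linarith [hS1 x])
      exact ⟨i, j, hij, fun h => hi ⟨h, i, rfl⟩, fun h => hj ⟨h, j, rfl⟩⟩
  · have hlarge : addOrderOf α = 0 ∨ 6 ≤ addOrderOf α := by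
      simp only [Set.mem_insert_iff, Set.mem_singleton_iff] at hsmall; omega
    have hpair x := exists_pair_notMem_of_injOn
      (injOn_add_natCast_zsmul_Iio x α (m := 6) hlarge) hWfin (by omega)
    refine ⟨fun x => ?_, fun _ x => ?_⟩
    · obtain ⟨i, -, -, hi, -⟩ := hpair x
      exact ⟨i, hi⟩
    · obtain ⟨i, j, h⟩ := hpair x
      exact ⟨i, j, h⟩
end

section
/- Let W ⊂ ℝ/ℤ satisfy |W| = 4 and the Divisibility Condition, and let w₀ ∈ W be such that the reflection about w₀ maps every element of W∖{w₀} to an element not in W. Let c : (ℝ/ℤ)∖W → {1, 2} be any coloring. Then there are at most two extensions c′ of c to (ℝ/ℤ)∖{w₀} with the property that c′ permits the reflection about w₀ or c′ permits some nontrivial rotation of ℝ/ℤ. -/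
/-- A coloring `c` of `(ℝ/ℤ) \ U` (represented by a total function whose values on
`U` are irrelevant) permits a map `γ` if some extension `cs` of `c` to all of
`ℝ/ℤ` satisfies `cs (γ x) = cs x` for all `x`. -/
def Permits (U : Set Circle1) (c : Circle1 → Fin 2) (γ : Circle1 → Circle1) : Prop :=
  ∃ cs : Circle1 → Fin 2, (∀ x ∉ U, cs x = c x) ∧ ∀ x, cs (γ x) = cs x

/-!
The first extension is forced by the reflection: for `x ∈ W \ {w₀}` the point `2w₀ - x` lies
off `W`, where `c'` is known. For rotations we show that two colorings with nonzero periods `α`,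
`α'` that agree off `W` agree everywhere, so at most one rotation-invariant extension exists.

Fix `w ∈ W`. If `⟨α⟩ ∩ ⟨α'⟩` contains some `γ ≠ 0`, both colorings are `γ`-periodic and some
`w + jγ` lies off `W`. Otherwise it suffices to find `h ∈ ⟨α⟩`, `h' ∈ ⟨α'⟩` with `w + h`,
`w + h'`, `w + h + h'` off `W`, and to walk around that parallelogram. Here we only use that `W`
has at most four points, no two of which differ by a nonzero element killed by some `k ≤ 4`
(this is where the Divisibility Condition enters). If `0, α, …, 4α` are distinct, the five
pairwise disjoint pairs `{w + jα, w + jα + h'}` cannot all meet `W`; if instead `kα = 0` and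
`k'α' = 0` with `k, k' ≤ 4`, every nonzero multiple of `α` or `α'` moves `w` off `W`.
-/

open Set Function AddSubgroup

theorem Set.exists_notMem_of_injOn_Iic {α : Type*} {W : Set α} {n : ℕ} (hW : W.encard ≤ n)
    {f : ℕ → α} (hf : InjOn f (Iic n)) : ∃ m ≤ n, f m ∉ W := by
  by_contra! h
  have hle := (encard_le_encard_of_injOn (s := Iic n) (fun m hm => h m hm) hf).trans hW
  rw [← (finite_Iic n).cast_ncard_eq, ncard_Iic_nat] at hle
  norm_cast at hle
  omega

theorem Set.Subsingleton.exists_subset_singleton {α : Type*} [Nonempty α] {s : Set α}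
    (hs : s.Subsingleton) : ∃ a, s ⊆ {a} := by
  rcases hs.eq_empty_or_singleton with rfl | ⟨a, rfl⟩
  exacts [⟨Classical.arbitrary α, empty_subset _⟩, ⟨a, subset_rfl⟩]

theorem injOn_nsmul_Iic_or_exists_nsmul_eq_zero {G : Type*} [AddGroup G] (α : G) (n : ℕ) :
    InjOn (· • α) (Iic n) ∨ ∃ k, 0 < k ∧ k ≤ n ∧ k • α = 0 := by
  refine or_iff_not_imp_right.2 fun h => ?_
  push Not at h
  suffices ∀ i ≤ n, ∀ j ≤ n, i ≤ j → i • α = j • α → i = j by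
    intro i hi j hj hij
    rcases le_total i j with hle | hle
    exacts [this i hi j hj hle hij, (this j hj i hi hle hij.symm).symm]
  intro i hi j hj hle hij
  by_contra hne
  exact h (j - i) (by omega) (by omega) (by rw [sub_nsmul α hle, hij, add_neg_cancel])

variable {G : Type*} [AddCommGroup G]

def TorsionSeparated (n : ℕ) (W : Set G) : Prop :=
  ∀ u ∈ W, ∀ t : G, t ≠ 0 → ∀ k : ℕ, 0 < k → k ≤ n → k • t = 0 → u + t ∉ W

def CornersOff (W : Set G) (w h h' : G) : Prop :=
  w + h ∉ W ∧ w + h' ∉ W ∧ w + h + h' ∉ W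

theorem CornersOff.symm {W : Set G} {w h h' : G} (hc : CornersOff W w h h') :
    CornersOff W w h' h :=
  ⟨hc.2.1, hc.1, by rw [add_right_comm]; exact hc.2.2⟩

theorem exists_cornersOff_of_injOn {n : ℕ} {W : Set G} (hW : W.encard ≤ n) {α : G}
    (hα : InjOn (· • α) (Iic n)) {K : AddSubgroup G} (hK : Disjoint (zmultiples α) K)
    {w h : G} (hh : h ∈ K) (hwh : w + h ∉ W) : ∃ g ∈ zmultiples α, CornersOff W w g h := by
  classical
  -- `w + m • α + e m` lies in `W` whenever the pair `{w + m • α, w + m • α + h}` meets `W`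
  let e : ℕ → G := fun m => if w + m • α ∈ W then 0 else h
  have he : ∀ m, e m ∈ K := fun m => by
    simp only [e]; split_ifs
    exacts [K.zero_mem, hh]
  have hinj : InjOn (fun m => w + m • α + e m) (Iic n) := by
    intro i hi j hj hij
    have hdiff : i • α - j • α = e j - e i := by
      rw [sub_eq_sub_iff_add_eq_add, add_comm (e j)]
      simpa only [add_assoc, add_right_inj] using hij
    refine hα hi hj (sub_eq_zero.1 (disjoint_def.1 hK ?_ (hdiff ▸ sub_mem (he j) (he i))))
    exact sub_mem (nsmul_mem_zmultiples α i) (nsmul_mem_zmultiples α j)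
  obtain ⟨m, -, hm⟩ := exists_notMem_of_injOn_Iic hW hinj
  have hm₁ : w + m • α ∉ W := fun hmem => hm (by simp [e, hmem])
  exact ⟨m • α, nsmul_mem_zmultiples α m, hm₁, hwh, by simpa [e, hm₁] using hm⟩

namespace TorsionSeparated

variable {n : ℕ} {W : Set G}

theorem mono {m : ℕ} (hsep : TorsionSeparated m W) (hnm : n ≤ m) : TorsionSeparated n W :=
  fun u hu t ht k hk hkn hkt => hsep u hu t ht k hk (hkn.trans hnm) hkt

theorem add_notMem_of_mem_zmultiples (hsep : TorsionSeparated n W) {w α : G} (hw : w ∈ W)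
    {k : ℕ} (hk : 0 < k) (hkn : k ≤ n) (hkα : k • α = 0) {h : G} (hh : h ∈ zmultiples α)
    (h0 : h ≠ 0) : w + h ∉ W := by
  obtain ⟨j, rfl⟩ := hh
  exact hsep w hw _ h0 k hk hkn (by rw [smul_comm, hkα, smul_zero])

theorem exists_mem_zmultiples_add_notMem (hsep : TorsionSeparated n W) (hW : W.encard ≤ n)
    {w β : G} (hw : w ∈ W) (hβ : β ≠ 0) : ∃ h ∈ zmultiples β, w + h ∉ W := by
  rcases injOn_nsmul_Iic_or_exists_nsmul_eq_zero β n with hinj | ⟨k, hk, hkn, hkβ⟩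
  · obtain ⟨m, -, hm⟩ := exists_notMem_of_injOn_Iic hW (f := fun m => w + m • β)
      fun i hi j hj hij => hinj hi hj (add_left_cancel hij)
    exact ⟨m • β, nsmul_mem_zmultiples β m, hm⟩
  · exact ⟨β, mem_zmultiples β,
      hsep.add_notMem_of_mem_zmultiples hw hk hkn hkβ (mem_zmultiples β) hβ⟩

theorem exists_cornersOff_of_nsmul_eq_zero (hsep : TorsionSeparated n W) {w α α' : G}
    (hw : w ∈ W) (hα : α ≠ 0) (hα' : α' ≠ 0) {k k' : ℕ} (hk : 0 < k) (hkn : k ≤ n)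
    (hkα : k • α = 0) (hk' : 0 < k') (hk'n : k' ≤ n) (hk'α' : k' • α' = 0)
    (hdisj : Disjoint (zmultiples α) (zmultiples α')) :
    ∃ h ∈ zmultiples α, ∃ h' ∈ zmultiples α', CornersOff W w h h' := by
  have hoff : ∀ h ∈ zmultiples α, h ≠ 0 → w + h ∉ W :=
    fun h hh h0 => hsep.add_notMem_of_mem_zmultiples hw hk hkn hkα hh h0
  have hoff' : ∀ h ∈ zmultiples α', h ≠ 0 → w + h ∉ W :=
    fun h hh h0 => hsep.add_notMem_of_mem_zmultiples hw hk' hk'n hk'α' hh h0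
  have hα₁ := mem_zmultiples α
  have hα'₁ := mem_zmultiples α'
  by_cases hu : w + α + α' ∈ W
  swap
  · exact ⟨α, hα₁, α', hα'₁, hoff α hα₁ hα, hoff' α' hα'₁ hα', hu⟩
  -- the corner `w + α + α'` lies in `W`, so its translates by `α` and by `α'` do not
  by_cases h2α' : 2 • α' = 0
  · by_cases h2α : 2 • α = 0
    · have hk2 : 2 ≤ k := by
        by_contra! hk1
        exact hα (by simpa [show k = 1 by omega] using hkα)
      have hsum : α + α' ≠ 0 := fun h0 => hα <| disjoint_def.1 hdisj hα₁ <| by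
        rw [eq_neg_of_add_eq_zero_left h0]; exact neg_mem hα'₁
      refine absurd (by rwa [add_assoc] at hu) (hsep w hw _ hsum 2 two_pos (hk2.trans hkn) ?_)
      rw [nsmul_add, h2α, h2α', add_zero]
    · refine ⟨2 • α, nsmul_mem_zmultiples α 2, α', hα'₁, hoff _ (nsmul_mem_zmultiples α 2) h2α,
        hoff' α' hα'₁ hα', ?_⟩
      convert hsep _ hu α hα k hk hkn hkα using 2
      rw [two_nsmul]; abel
  · refine ⟨α, hα₁, 2 • α', nsmul_mem_zmultiples α' 2, hoff α hα₁ hα,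
      hoff' _ (nsmul_mem_zmultiples α' 2) h2α', ?_⟩
    convert hsep _ hu α' hα' k' hk' hk'n hk'α' using 2
    rw [two_nsmul]; abel

theorem exists_cornersOff (hsep : TorsionSeparated n W) (hW : W.encard ≤ n) {w α α' : G}
    (hw : w ∈ W) (hα : α ≠ 0) (hα' : α' ≠ 0) (hdisj : Disjoint (zmultiples α) (zmultiples α')) :
    ∃ h ∈ zmultiples α, ∃ h' ∈ zmultiples α', CornersOff W w h h' := by
  rcases injOn_nsmul_Iic_or_exists_nsmul_eq_zero α n with hinj | ⟨k, hk, hkn, hkα⟩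
  · obtain ⟨h', hh', hwh'⟩ := hsep.exists_mem_zmultiples_add_notMem hW hw hα'
    obtain ⟨h, hh, hc⟩ := exists_cornersOff_of_injOn hW hinj hdisj hh' hwh'
    exact ⟨h, hh, h', hh', hc⟩
  rcases injOn_nsmul_Iic_or_exists_nsmul_eq_zero α' n with hinj' | ⟨k', hk', hk'n, hk'α'⟩
  · obtain ⟨h, hh, hwh⟩ := hsep.exists_mem_zmultiples_add_notMem hW hw hα
    obtain ⟨h', hh', hc⟩ := exists_cornersOff_of_injOn hW hinj' hdisj.symm hh hwh
    exact ⟨h, hh, h', hh', hc.symm⟩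
  · exact hsep.exists_cornersOff_of_nsmul_eq_zero hw hα hα' hk hkn hkα hk' hk'n hk'α' hdisj

theorem eq_of_periodic_of_eqOn_compl (hsep : TorsionSeparated n W) (hW : W.encard ≤ n)
    {β : Type*} {f g : G → β} {α α' : G} (hα : α ≠ 0) (hα' : α' ≠ 0) (hf : Periodic f α)
    (hg : Periodic g α') (hfg : EqOn f g Wᶜ) : f = g := by
  funext w
  by_cases hw : w ∈ W
  swap
  · exact hfg hw
  have hf' : ∀ h ∈ zmultiples α, Periodic f h := by
    rintro _ ⟨j, rfl⟩; exact hf.zsmul j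
  have hg' : ∀ h ∈ zmultiples α', Periodic g h := by
    rintro _ ⟨j, rfl⟩; exact hg.zsmul j
  by_cases hdisj : Disjoint (zmultiples α) (zmultiples α')
  · obtain ⟨h, hh, h', hh', hwh, hwh', hwhh'⟩ := hsep.exists_cornersOff hW hw hα hα' hdisj
    calc f w = f (w + h) := (hf' h hh w).symm
      _ = g (w + h) := hfg hwh
      _ = g (w + h + h') := (hg' h' hh' _).symm
      _ = f (w + h + h') := (hfg hwhh').symm
      _ = f (w + h') := by rw [add_right_comm, hf' h hh]
      _ = g (w + h') := hfg hwh'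
      _ = g w := hg' h' hh' w
  · obtain ⟨γ, hγα, hγα', hγ⟩ : ∃ γ ∈ zmultiples α, γ ∈ zmultiples α' ∧ γ ≠ 0 := by
      simpa [disjoint_def] using hdisj
    obtain ⟨h, hh, hwh⟩ := hsep.exists_mem_zmultiples_add_notMem hW hw hγ
    calc f w = f (w + h) := (hf' h (zmultiples_le_of_mem hγα hh) w).symm
      _ = g (w + h) := hfg hwh
      _ = g w := hg' h (zmultiples_le_of_mem hγα' hh) w

theorem subsingleton_periodic_extensions (hsep : TorsionSeparated n W) (hW : W.encard ≤ n)
    {β : Type*} (c : G → β) : {f : G → β | EqOn f c Wᶜ ∧ ∃ α ≠ 0, Periodic f α}.Subsingleton := by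
  rintro f ⟨hfc, α, hα, hf⟩ g ⟨hgc, α', hα', hg⟩
  exact hsep.eq_of_periodic_of_eqOn_compl hW hα hα' hf hg (hfc.trans hgc.symm)

end TorsionSeparated

theorem DivCond.torsionSeparated {W : Set Circle1} (hdiv : DivCond W) : TorsionSeparated 5 W := by
  intro u hu t ht k hk hk5 hkt hut
  obtain ⟨m, hmk, rfl⟩ := (AddCircle.nsmul_eq_zero_iff hk).1 hkt
  have hm : 1 ≤ m := Nat.one_le_iff_ne_zero.2 fun hm => ht (by simp [hm])
  have hk' : k ∈ ({2, 3, 4, 5} : Set ℕ) := by simp only [mem_insert_iff, mem_singleton_iff]; omega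
  exact (eq_empty_iff_forall_notMem.1 (hdiv k hk' m hm hmk)) _ ⟨⟨u, hu, by simp⟩, hut⟩

theorem at_most_two_forbidden_extensions_general (W : Set Circle1) (hW : W.ncard = 4)
    (hdiv : DivCond W) (w₀ : Circle1) (hw₀ : w₀ ∈ W)
    (hrefl : ∀ w ∈ W, w ≠ w₀ → w₀ + w₀ - w ∉ W) (c : Circle1 → Fin 2) :
    ∃ d₁ d₂ : Circle1 → Fin 2,
      ∀ c' : Circle1 → Fin 2, (∀ x ∉ W, c' x = c x) →
        (Permits {w₀} c' (fun x => w₀ + w₀ - x) ∨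
          ∃ α : Circle1, α ≠ 0 ∧ Permits {w₀} c' (fun x => x + α)) →
        ((∀ x : Circle1, x ≠ w₀ → c' x = d₁ x) ∨
          (∀ x : Circle1, x ≠ w₀ → c' x = d₂ x)) := by
  classical
  have hW4 : W.encard ≤ 4 := by
    rw [← (finite_of_ncard_ne_zero (by omega)).cast_ncard_eq, hW]; rfl
  have hsep : TorsionSeparated 4 W := hdiv.torsionSeparated.mono (by norm_num)
  obtain ⟨d₂, hd₂⟩ := (hsep.subsingleton_periodic_extensions hW4 c).exists_subset_singleton
  refine ⟨fun x => if x ∈ W then c (w₀ + w₀ - x) else c x, d₂, fun c' hc' hperm => ?_⟩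
  rcases hperm with ⟨cs, hcs, hcs_refl⟩ | ⟨α, hα, cs, hcs, hcs_rot⟩
  · refine Or.inl fun x hx => ?_
    dsimp only
    split_ifs with hxW
    · have hx' : w₀ + w₀ - x ≠ w₀ := fun h => hx
        (by rw [sub_eq_iff_eq_add, add_right_inj] at h; exact h.symm)
      rw [← hcs x hx, ← hcs_refl x, hcs _ hx', hc' _ (hrefl x hxW hx)]
    · exact hc' x hxW
  · have hcs_ext : EqOn cs c Wᶜ := fun x hx =>
      (hcs x (ne_of_mem_of_not_mem hw₀ hx).symm).trans (hc' x hx)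
    refine Or.inr fun x hx => ?_
    rw [← hcs x hx, hd₂ ⟨hcs_ext, α, hα, hcs_rot⟩]

/-- Let `W ⊂ ℝ/ℤ` have exactly four elements and satisfy the Divisibility
Condition, and let `w₀ ∈ W` be such that the reflection about `w₀` maps
`W \ {w₀}` outside of `W`.  For any coloring `c` of `(ℝ/ℤ) \ W`, there are at most
two extensions of `c` to `(ℝ/ℤ) \ {w₀}` that permit the reflection about `w₀` or
permit some nontrivial rotation: there exist colorings `d₁, d₂` such that every
extension `c'` of `c` to `(ℝ/ℤ) \ {w₀}` with this property agrees with `d₁` or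
with `d₂` away from `w₀`. -/
theorem at_most_two_forbidden_extensions (W : Set Circle1) (hW : W.ncard = 4)
    (hWfin : W.Finite) (hdiv : DivCond W) (w₀ : Circle1) (hw₀ : w₀ ∈ W)
    (hrefl : ∀ w ∈ W, w ≠ w₀ → w₀ + w₀ - w ∉ W) (c : Circle1 → Fin 2) :
    ∃ d₁ d₂ : Circle1 → Fin 2,
      ∀ c' : Circle1 → Fin 2, (∀ x ∉ W, c' x = c x) →
        (Permits {w₀} c' (fun x => w₀ + w₀ - x) ∨
          ∃ α : Circle1, α ≠ 0 ∧ Permits {w₀} c' (fun x => x + α)) →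
        ((∀ x : Circle1, x ≠ w₀ → c' x = d₁ x) ∨
          (∀ x : Circle1, x ≠ w₀ → c' x = d₂ x)) :=
  at_most_two_forbidden_extensions_general W hW hdiv w₀ hw₀ hrefl c
end

section
/- Let w₀ ∈ ℝ/ℤ and let c : (ℝ/ℤ)∖{w₀} → {R, B} be a coloring. Suppose τ_R and τ_B are distinct reflections of ℝ/ℤ, neither of which fixes w₀, such that the extension of c assigning color R to w₀ is preserved by τ_R and the extension of c assigning color B to w₀ is preserved by τ_B. Let σ = τ_B ∘ τ_R. Then: (F0) c(σ(w₀)) = R and c(σ⁻¹(w₀)) = B; (F1) if x and σ(x) both lie in (ℝ/ℤ)∖{w₀} with c(x) = R and c(σ(x)) = B, then x = τ_R(w₀) and σ(x) = τ_B(w₀); (F2) there is no x with x, σ(x) ∈ (ℝ/ℤ)∖{w₀}, c(x) = B and c(σ(x)) = R; (F3) c(σ(x)) = c(x) for every x ∉ {τ_R(w₀), σ⁻¹(w₀), w₀}. -/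
open scoped Classical

/-- Colors: `R` is `0`, `B` is `1` in `Fin 2`.
Let `w₀ ∈ ℝ/ℤ` and let `c` be a coloring of `(ℝ/ℤ) \ {w₀}` (represented by a total
function whose value at `w₀` is irrelevant).  Suppose `τ_R : x ↦ βR - x` and
`τ_B : x ↦ βB - x` are distinct reflections, neither fixing `w₀`, such that the
extension of `c` coloring `w₀` with `R` is preserved by `τ_R` and the extension
coloring `w₀` with `B` is preserved by `τ_B`.  Let `σ = τ_B ∘ τ_R`,
so `σ x = βB - (βR - x)` and `σ⁻¹ x = βR - (βB - x)`.  Then: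
(F0) `c (σ w₀) = R` and `c (σ⁻¹ w₀) = B`;
(F1) if `x, σ x ≠ w₀`, `c x = R` and `c (σ x) = B`, then `x = τ_R w₀` and `σ x = τ_B w₀`;
(F2) there is no `x` with `x, σ x ≠ w₀`, `c x = B` and `c (σ x) = R`;
(F3) `c (σ x) = c x` for all `x ∉ {τ_R w₀, σ⁻¹ w₀, w₀}`. -/
theorem sigma_traversal (w₀ : Circle1) (c : Circle1 → Fin 2) (βR βB : Circle1)
    (hdist : (fun x : Circle1 => βR - x) ≠ (fun x : Circle1 => βB - x))
    (hRw : βR - w₀ ≠ w₀) (hBw : βB - w₀ ≠ w₀)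
    (hR : ∀ x : Circle1,
      Function.update c w₀ (0 : Fin 2) (βR - x) = Function.update c w₀ (0 : Fin 2) x)
    (hB : ∀ x : Circle1,
      Function.update c w₀ (1 : Fin 2) (βB - x) = Function.update c w₀ (1 : Fin 2) x) :
    (c (βB - (βR - w₀)) = 0 ∧ c (βR - (βB - w₀)) = 1) ∧
    (∀ x : Circle1, x ≠ w₀ → βB - (βR - x) ≠ w₀ → c x = 0 → c (βB - (βR - x)) = 1 →
      x = βR - w₀ ∧ βB - (βR - x) = βB - w₀) ∧
    (¬ ∃ x : Circle1, x ≠ w₀ ∧ βB - (βR - x) ≠ w₀ ∧ c x = 1 ∧ c (βB - (βR - x)) = 0) ∧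
    (∀ x : Circle1, x ≠ βR - w₀ → x ≠ βR - (βB - w₀) → x ≠ w₀ →
      c (βB - (βR - x)) = c x) := by
  -- βR ≠ βB
  have hne : βR ≠ βB := by
    intro h; apply hdist; funext x; rw [h]
  -- c (βR - w₀) = 0
  have cRw : c (βR - w₀) = 0 := by
    have := hR w₀
    rwa [Function.update_self, Function.update_of_ne hRw] at this
  have cBw : c (βB - w₀) = 1 := by
    have := hB w₀
    rwa [Function.update_self, Function.update_of_ne hBw] at this
  have reflR : ∀ x : Circle1, x ≠ w₀ → βR - x ≠ w₀ → c (βR - x) = c x := by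
    intro x hx hrx
    have := hR x
    rwa [Function.update_of_ne hrx, Function.update_of_ne hx] at this
  have reflB : ∀ x : Circle1, x ≠ w₀ → βB - x ≠ w₀ → c (βB - x) = c x := by
    intro x hx hrx
    have := hB x
    rwa [Function.update_of_ne hrx, Function.update_of_ne hx] at this
  have key : ∀ a x : Circle1, a - x = w₀ → x = a - w₀ := by
    intro a x h
    have : a - (a - x) = a - w₀ := by rw [h]
    rwa [sub_sub_cancel] at this
  have hσw : βB - (βR - w₀) ≠ w₀ := by
    intro h
    have := key βB (βR - w₀) h
    have h2 : βR - w₀ = βB - w₀ := this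
    have : βR = βB := by
      have := congrArg (· + w₀) h2
      simpa [sub_add_cancel] using this
    exact hne this
  have hσ'w : βR - (βB - w₀) ≠ w₀ := by
    intro h
    have h2 : βB - w₀ = βR - w₀ := key βR (βB - w₀) h
    have : βR = βB := by
      have := congrArg (· + w₀) h2
      simpa [sub_add_cancel] using this.symm
    exact hne this
  refine ⟨⟨?_, ?_⟩, ?_, ?_, ?_⟩
  · rw [reflB (βR - w₀) hRw hσw]; exact cRw
  · rw [reflR (βB - w₀) hBw hσ'w]; exact cBw
  · intro x hx hσx hcx hcσx
    by_cases hy : βR - x = w₀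
    · constructor
      · exact key βR x hy
      · rw [hy]
    · exfalso
      have h1 : c (βR - x) = c x := reflR x hx hy
      have h2 : c (βB - (βR - x)) = c (βR - x) := reflB (βR - x) hy hσx
      rw [h2, h1, hcx] at hcσx
      exact absurd hcσx (by decide)
  · rintro ⟨x, hx, hσx, hcx, hcσx⟩
    by_cases hy : βR - x = w₀
    · have hxval : x = βR - w₀ := key βR x hy
      rw [hxval, cRw] at hcx
      exact absurd hcx (by decide)
    · have h1 : c (βR - x) = c x := reflR x hx hy
      have h2 : c (βB - (βR - x)) = c (βR - x) := reflB (βR - x) hy hσx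
      rw [h2, h1, hcx] at hcσx
      exact absurd hcσx (by decide)
  · intro x h1 h2 h3
    have hy : βR - x ≠ w₀ := fun h => h1 (key βR x h)
    have hσx : βB - (βR - x) ≠ w₀ := by
      intro h
      have h' : βR - x = βB - w₀ := key βB (βR - x) h
      apply h2
      have := congrArg (fun y => βR - y) h'
      simpa [sub_sub_cancel] using this
    rw [reflB (βR - x) hy hσx, reflR x h3 hy]
end
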